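/- For every simple permutation α, the set P(α) of pin words of α has at most 48 elements, and every element of P(α) is either strict or quasi-strict. -/
import Mathlib


namespace PinStmt

abbrev Point : Type := ℝ × ℝ

inductive Letter : Type
  | n1 | n2 | n3 | n4 | U | D | L | R
deriving DecidableEq

def Letter.isNum : Letter → Bool
  | .n1 | .n2 | .n3 | .n4 => true
  | _ => false

/-- `c` is one of the numeral letters 1,2,3,4. -/
def Letter.IsNumeral (c : Letter) : Prop := c.isNum = true

/-- `c` is one of the direction letters U,D,L,R. -/
def Letter.IsDirection (c : Letter) : Prop := c.isNum = false

/-- `q i` lies strictly above all of `q 0, …, q (i-1)`. -/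
def AboveAll (q : ℕ → Point) (i : ℕ) : Prop := ∀ j < i, (q j).2 < (q i).2
def BelowAll (q : ℕ → Point) (i : ℕ) : Prop := ∀ j < i, (q i).2 < (q j).2
def RightAll (q : ℕ → Point) (i : ℕ) : Prop := ∀ j < i, (q j).1 < (q i).1
def LeftAll  (q : ℕ → Point) (i : ℕ) : Prop := ∀ j < i, (q i).1 < (q j).1

/-- The vertical line through `q i` strictly separates `q (i-1)` from `{q j | j < i-1}`. -/
def VLineSep (q : ℕ → Point) (i : ℕ) : Prop :=
  ((q (i - 1)).1 < (q i).1 ∧ ∀ j < i - 1, (q i).1 < (q j).1) ∨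
  ((q i).1 < (q (i - 1)).1 ∧ ∀ j < i - 1, (q j).1 < (q i).1)

/-- The horizontal line through `q i` strictly separates `q (i-1)` from `{q j | j < i-1}`. -/
def HLineSep (q : ℕ → Point) (i : ℕ) : Prop :=
  ((q (i - 1)).2 < (q i).2 ∧ ∀ j < i - 1, (q i).2 < (q j).2) ∨
  ((q i).2 < (q (i - 1)).2 ∧ ∀ j < i - 1, (q j).2 < (q i).2)

/-- Separation condition for the pin `q i`. -/
def SepCond (q : ℕ → Point) (i : ℕ) : Prop := VLineSep q i ∨ HLineSep q i

/-- Independence condition: neither line through `q i` splits `{q j | j < i}` in two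
nonempty parts. -/
def IndepCond (q : ℕ → Point) (i : ℕ) : Prop :=
  ¬((∃ j < i, (q j).1 < (q i).1) ∧ (∃ j < i, (q i).1 < (q j).1)) ∧
  ¬((∃ j < i, (q j).2 < (q i).2) ∧ (∃ j < i, (q i).2 < (q j).2))

/-- `q i` lies outside the bounding box of `{q j | j < i}`. -/
def OutsideBox (q : ℕ → Point) (i : ℕ) : Prop :=
  RightAll q i ∨ LeftAll q i ∨ AboveAll q i ∨ BelowAll q i

/-- `(q 0, …, q (m-1))` is a pin sequence. -/
def IsPinSeq (q : ℕ → Point) (m : ℕ) : Prop :=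
  (∀ i < m, ∀ j < m, i ≠ j → (q i).1 ≠ (q j).1 ∧ (q i).2 ≠ (q j).2) ∧
  (∀ i, 1 ≤ i → i < m → OutsideBox q i ∧ (SepCond q i ∨ IndepCond q i))

/-- `(p 0, …, p (n-1))` is a pin representation of `σ`, where `f` sends the time index of a
pin to the position (index) of the corresponding point in the diagram of `σ`. -/
def IsPinReprWith {n : ℕ} (σ : Equiv.Perm (Fin n)) (p : ℕ → Point)
    (f : Fin n ≃ Fin n) : Prop :=
  IsPinSeq p n ∧ ∀ j k : Fin n,
    ((p j.val).1 < (p k.val).1 ↔ f j < f k) ∧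
    ((p j.val).2 < (p k.val).2 ↔ σ (f j) < σ (f k))

def IsPinRepr {n : ℕ} (σ : Equiv.Perm (Fin n)) (p : ℕ → Point) : Prop :=
  ∃ f, IsPinReprWith σ p f

/-- `σ` is a pin-permutation. -/
def IsPinPerm {n : ℕ} (σ : Equiv.Perm (Fin n)) : Prop := ∃ p, IsPinRepr σ p

/-- Prepend the origin `p0` to the sequence of pins `p`. -/
def withOrigin (p0 : Point) (p : ℕ → Point) : ℕ → Point
  | 0 => p0
  | i + 1 => p i

/-- The letter encoding the pin `q i` (where `q 0` is the origin). -/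
def LetterIs (q : ℕ → Point) (i : ℕ) : Letter → Prop
  | .U => 2 ≤ i ∧ SepCond q i ∧ AboveAll q i
  | .D => 2 ≤ i ∧ SepCond q i ∧ BelowAll q i
  | .L => 2 ≤ i ∧ SepCond q i ∧ LeftAll q i
  | .R => 2 ≤ i ∧ SepCond q i ∧ RightAll q i
  | .n1 => IndepCond q i ∧ RightAll q i ∧ AboveAll q i
  | .n2 => IndepCond q i ∧ LeftAll q i ∧ AboveAll q i
  | .n3 => IndepCond q i ∧ LeftAll q i ∧ BelowAll q i
  | .n4 => IndepCond q i ∧ RightAll q i ∧ BelowAll q i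

/-- `w` is the pin word associated with the pin sequence `(q 0, q 1, …, q n)`,
whose origin is `q 0`. -/
def WordOf (q : ℕ → Point) (n : ℕ) (w : List Letter) : Prop :=
  w.length = n ∧ ∀ i < n, LetterIs q (i + 1) (w.getD i Letter.U)

/-- `P(σ)`: the set of pin words of the permutation `σ`. -/
def PinWords {n : ℕ} (σ : Equiv.Perm (Fin n)) : Set (List Letter) :=
  { w | ∃ (p : ℕ → Point) (p0 : Point), IsPinRepr σ p ∧
        IsPinSeq (withOrigin p0 p) (n + 1) ∧ WordOf (withOrigin p0 p) n w }

/-- The set of pin words associated with the fixed pin representation `p`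
over all admissible origins. -/
def WordsOfRepr (n : ℕ) (p : ℕ → Point) : Set (List Letter) :=
  { w | ∃ p0 : Point, IsPinSeq (withOrigin p0 p) (n + 1) ∧ WordOf (withOrigin p0 p) n w }

/-- `(p 0, …, p (n-1))` is a proper pin sequence: every pin from the third one on
satisfies the separation condition. -/
def IsProperSeq (p : ℕ → Point) (n : ℕ) : Prop :=
  IsPinSeq p n ∧ ∀ i, 2 ≤ i → i < n → SepCond p i

/-- `σ` is a proper pin-permutation. -/
def IsProperPinPerm {n : ℕ} (σ : Equiv.Perm (Fin n)) : Prop :=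
  ∃ p, IsPinRepr σ p ∧ IsProperSeq p n

/-- A strict pin word: a numeral followed only by directions. -/
def IsStrict (w : List Letter) : Prop :=
  ∃ c cs, w = c :: cs ∧ c.IsNumeral ∧ ∀ d ∈ cs, d.IsDirection

/-- A quasi-strict pin word: two numerals followed only by directions. -/
def IsQuasiStrict (w : List Letter) : Prop :=
  ∃ c₁ c₂ cs, w = c₁ :: c₂ :: cs ∧ c₁.IsNumeral ∧ c₂.IsNumeral ∧ ∀ d ∈ cs, d.IsDirection

/-- `w` is a pin word (of some permutation). -/
def IsPinWord (w : List Letter) : Prop :=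
  ∃ (n : ℕ) (σ : Equiv.Perm (Fin n)), w ∈ PinWords σ

/-- `SP`: the set of strict pin words. -/
def SPset : Set (List Letter) := { w | IsPinWord w ∧ IsStrict w }

def phi2 : Letter → Letter → List Letter
  | .n1, .R => [.R, .U, .R]
  | .n2, .R => [.L, .U, .R]
  | .n3, .R => [.L, .D, .R]
  | .n4, .R => [.R, .D, .R]
  | .n1, .L => [.R, .U, .L]
  | .n2, .L => [.L, .U, .L]
  | .n3, .L => [.L, .D, .L]
  | .n4, .L => [.R, .D, .L]
  | .n1, .U => [.U, .R, .U]
  | .n2, .U => [.U, .L, .U]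
  | .n3, .U => [.D, .L, .U]
  | .n4, .U => [.D, .R, .U]
  | .n1, .D => [.U, .R, .D]
  | .n2, .D => [.U, .L, .D]
  | .n3, .D => [.D, .L, .D]
  | .n4, .D => [.D, .R, .D]
  | _, _ => []

def phi1 : Letter → Set (List Letter)
  | .n1 => {[.U, .R], [.R, .U]}
  | .n2 => {[.U, .L], [.L, .U]}
  | .n3 => {[.D, .L], [.L, .D]}
  | .n4 => {[.R, .D], [.D, .R]}
  | _ => ∅

def phiInv2 : Letter → Letter → Letter
  | .U, .R => .n1
  | .R, .U => .n1
  | .U, .L => .n2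
  | .L, .U => .n2
  | .D, .L => .n3
  | .L, .D => .n3
  | .R, .D => .n4
  | .D, .R => .n4
  | _, _ => .n1

/-- `φ(u)`, as a set of words: a two-element set when `u` is a single numeral,
a singleton `{φ(u)}` when `u` is a strict pin word of length at least 2, and
the identity (as a singleton) on words of `M`. -/
def phiSet : List Letter → Set (List Letter)
  | [] => {[]}
  | [c] => if c.isNum then phi1 c else {[c]}
  | c :: d :: rest => if c.isNum then {phi2 c d ++ rest} else {c :: d :: rest}

/-- The quadrant numeral `q(c,d)`. -/
def quadNum (c d : Letter) : Letter :=
  if c.isNum then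
    match phi2 c d with
    | [_, b, e] => phiInv2 b e
    | _ => Letter.n1
  else phiInv2 c d

/-- `us` is the strong numeral-led factor decomposition of `u`. -/
def IsSNLD (u : List Letter) (us : List (List Letter)) : Prop :=
  us.flatten = u ∧ ∀ v ∈ us, IsStrict v

def interleave : List (List Letter) → List (List Letter) → List Letter
  | [], _ => []
  | v :: vs, [] => v ++ interleave vs []
  | v :: vs, w :: ws => v ++ w ++ interleave vs ws

/-- The condition on the pieces `v^(i)`, `w^(i)`, `u^(i)` in the definition of `≼`. -/
def PieceCond (v wi ui : List Letter) : Prop :=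
  (∃ c cs, wi = c :: cs ∧ c.IsNumeral ∧ wi = ui) ∨
  (∃ d ds c, wi = d :: ds ∧ d.IsDirection ∧ v ≠ [] ∧ v.getLast? = some c ∧
    ui = quadNum c d :: ds)

/-- The order `u ≼ w` on pin words. -/
def PinOrder (u w : List Letter) : Prop :=
  ∃ us, IsSNLD u us ∧
    ∃ vs ws : List (List Letter), ws.length = us.length ∧ vs.length = us.length + 1 ∧
      w = interleave vs ws ∧
      ∀ i < us.length, PieceCond (vs.getD i []) (ws.getD i []) (us.getD i [])

def IsVert (c : Letter) : Prop := c = Letter.U ∨ c = Letter.D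
def IsHoriz (c : Letter) : Prop := c = Letter.L ∨ c = Letter.R

/-- `M`: words over `{U,D,L,R}` of length at least 2 with no factor in
`{UU,UD,DU,DD,LL,LR,RL,RR}`. -/
def MSet : Set (List Letter) :=
  { w | 2 ≤ w.length ∧ (∀ c ∈ w, c.IsDirection) ∧
        ∀ a c : Letter, [a, c] <:+: w →
          ¬(IsVert a ∧ IsVert c) ∧ ¬(IsHoriz a ∧ IsHoriz c) }

/-- `A*`: all words over the direction alphabet `A = {U,D,L,R}`. -/
def Astar : Set (List Letter) := { w | ∀ c ∈ w, c.IsDirection }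

/-- Concatenation of languages. -/
def LMul (X Y : Set (List Letter)) : Set (List Letter) :=
  { w | ∃ x ∈ X, ∃ y ∈ Y, w = x ++ y }

/-- The language `L(u) = A* φ(u^(1)) A* φ(u^(2)) … A* φ(u^(j)) A*`. -/
def LangOf (u : List Letter) : Set (List Letter) :=
  { m | ∃ us, IsSNLD u us ∧
      ∃ vs ws : List (List Letter), ws.length = us.length ∧ vs.length = us.length + 1 ∧
        m = interleave vs ws ∧ (∀ v ∈ vs, v ∈ Astar) ∧
        ∀ i < us.length, ws.getD i [] ∈ phiSet (us.getD i []) }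

/-- The language `L_π = ⋃_{u ∈ P(π)} L(u)`. -/
def Lperm {n : ℕ} (π : Equiv.Perm (Fin n)) : Set (List Letter) :=
  { m | ∃ u ∈ PinWords π, m ∈ LangOf u }

/-- `π ≤ σ`: the permutation `π` is a pattern of the permutation `σ`. -/
def IsPattern {k n : ℕ} (π : Equiv.Perm (Fin k)) (σ : Equiv.Perm (Fin n)) : Prop :=
  ∃ g : Fin k → Fin n, StrictMono g ∧ ∀ a b : Fin k, (π a < π b ↔ σ (g a) < σ (g b))

/-- `q i` lies in the quadrant (given by a numeral letter) of the bounding box of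
`{q j | j < m}`. -/
def InQuadOf (q : ℕ → Point) (i m : ℕ) : Letter → Prop
  | .n1 => (∀ j < m, (q j).1 < (q i).1) ∧ (∀ j < m, (q j).2 < (q i).2)
  | .n2 => (∀ j < m, (q i).1 < (q j).1) ∧ (∀ j < m, (q j).2 < (q i).2)
  | .n3 => (∀ j < m, (q i).1 < (q j).1) ∧ (∀ j < m, (q i).2 < (q j).2)
  | .n4 => (∀ j < m, (q j).1 < (q i).1) ∧ (∀ j < m, (q i).2 < (q j).2)
  | _ => False


/-- `σ = ⊕[π_0, …, π_(r-1)]` where the `k`-th child occupies positions and values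
`[b k, b (k+1))`. -/
def SumDecomp {n : ℕ} (σ : Equiv.Perm (Fin n)) (r : ℕ) (b : ℕ → ℕ) : Prop :=
  b 0 = 0 ∧ b r = n ∧ (∀ k < r, b k < b (k + 1)) ∧
  ∀ k < r, ∀ i : Fin n, b k ≤ i.val → i.val < b (k + 1) →
    b k ≤ (σ i).val ∧ (σ i).val < b (k + 1)

/-- The child of `σ` occupying positions `[lo, hi)` is ⊕-indecomposable. -/
def ChildIndecomp {n : ℕ} (σ : Equiv.Perm (Fin n)) (lo hi : ℕ) : Prop :=
  ¬ ∃ m, lo < m ∧ m < hi ∧ ∀ i : Fin n, lo ≤ i.val → i.val < m → (σ i).val < m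

/-- The pin read at time `a` belongs to the `k`-th child (`f` sends times to positions). -/
def PinInChild {n : ℕ} (b : ℕ → ℕ) (f : Fin n ≃ Fin n) (a : Fin n) (k : ℕ) : Prop :=
  b k ≤ (f a).val ∧ (f a).val < b (k + 1)

/-- The set of (times of) pins belonging to the `k`-th child. -/
def ChildPins {n : ℕ} (b : ℕ → ℕ) (f : Fin n ≃ Fin n) (k : ℕ) : Set (Fin n) :=
  { a | PinInChild b f a k }

/-- The starting times of the maximal runs of consecutive reading times in `S`. -/
def PieceStarts {n : ℕ} (S : Set (Fin n)) : Set (Fin n) :=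
  { a | a ∈ S ∧ ∀ c : Fin n, c.val + 1 = a.val → c ∉ S }

/-- `S` is read in exactly `k` pieces. -/
def ReadInPieces {n : ℕ} (S : Set (Fin n)) (k : ℕ) : Prop := (PieceStarts S).ncard = k

/-- The pins of `D` are all read before the pins of `C`. -/
def ReadBefore {n : ℕ} (D C : Set (Fin n)) : Prop := ∀ a ∈ D, ∀ c ∈ C, a < c

/-- The infinite oscillating sequence `ω = 3 1 5 2 7 4 9 6 …` (1-indexed). -/
def omegaSeq (i : ℕ) : ℕ := if i = 2 then 1 else if i % 2 = 1 then i + 2 else i - 2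

/-- `π` is a pattern of some prefix of the infinite oscillating sequence `ω`. -/
def IsOmegaPattern {k : ℕ} (π : Equiv.Perm (Fin k)) : Prop :=
  ∃ g : Fin k → ℕ, StrictMono g ∧ (∀ a, 1 ≤ g a) ∧
    ∀ a b : Fin k, (π a < π b ↔ omegaSeq (g a) < omegaSeq (g b))

/-- The interval of positions `[lo, lo+len)` is a block of `σ`. -/
def IsBlockOf {n : ℕ} (σ : Equiv.Perm (Fin n)) (lo len : ℕ) : Prop :=
  lo + len ≤ n ∧ ∃ vlo, ∀ i : Fin n,
    (lo ≤ i.val ∧ i.val < lo + len) ↔ (vlo ≤ (σ i).val ∧ (σ i).val < vlo + len)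

/-- `σ` is a simple permutation. -/
def IsSimplePerm {n : ℕ} (σ : Equiv.Perm (Fin n)) : Prop :=
  4 ≤ n ∧ ∀ lo len, IsBlockOf σ lo len → len ≤ 1 ∨ len = n

/-- `π` is the permutation whose one-line notation is the list `l`. -/
def PermMatches {k : ℕ} (π : Equiv.Perm (Fin k)) (l : List ℕ) : Prop :=
  l.length = k ∧ ∀ i : Fin k, (π i).val + 1 = l.getD i.val 0

/-- `ξ` is an increasing oscillation. -/
def IsIncrOsc {k : ℕ} (ξ : Equiv.Perm (Fin k)) : Prop :=
  PermMatches ξ [1] ∨ PermMatches ξ [2, 1] ∨ PermMatches ξ [2, 3, 1] ∨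
  PermMatches ξ [3, 1, 2] ∨ (4 ≤ k ∧ IsSimplePerm ξ ∧ IsOmegaPattern ξ)

/-- The child of `σ` occupying positions `[lo, hi)` is order-isomorphic to `ξ`. -/
def ChildIsPerm {n m : ℕ} (σ : Equiv.Perm (Fin n)) (lo hi : ℕ)
    (ξ : Equiv.Perm (Fin m)) : Prop :=
  lo + m = hi ∧ ∀ (a c : Fin m) (ia ic : Fin n), ia.val = lo + a.val → ic.val = lo + c.val →
    ((σ ia).val < (σ ic).val ↔ (ξ a).val < (ξ c).val)

/-- The child of `σ` occupying positions `[lo, hi)` is an increasing oscillation. -/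
def ChildIsIncrOsc {n : ℕ} (σ : Equiv.Perm (Fin n)) (lo hi : ℕ) : Prop :=
  ∃ (m : ℕ) (ξ : Equiv.Perm (Fin m)), IsIncrOsc ξ ∧ ChildIsPerm σ lo hi ξ

/-- `τ = ⊕[ξ, η]`. -/
def IsDSum2 {m k l : ℕ} (τ : Equiv.Perm (Fin m)) (ξ : Equiv.Perm (Fin k))
    (η : Equiv.Perm (Fin l)) : Prop :=
  m = k + l ∧ (∀ i : Fin m, i.val < k → (τ i).val < k) ∧
    ChildIsPerm τ 0 k ξ ∧ ChildIsPerm τ k m η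

/-- The origin `p0` lies in quadrant 1 of the bounding box of `{p j | j < n}`. -/
def OriginQ1 (p0 : Point) (p : ℕ → Point) (n : ℕ) : Prop :=
  ∀ j < n, (p j).1 < p0.1 ∧ (p j).2 < p0.2

/-- The origin `p0` lies in quadrant 3 of the bounding box of `{p j | j < n}`. -/
def OriginQ3 (p0 : Point) (p : ℕ → Point) (n : ℕ) : Prop :=
  ∀ j < n, p0.1 < (p j).1 ∧ p0.2 < (p j).2

/-- `P^(1)(ξ)`: pin words of `ξ` whose origin lies in quadrant 1 w.r.t. the points of `ξ`. -/
def PinWordsQ1 {n : ℕ} (ξ : Equiv.Perm (Fin n)) : Set (List Letter) :=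
  { w | ∃ (p : ℕ → Point) (p0 : Point), IsPinRepr ξ p ∧
        IsPinSeq (withOrigin p0 p) (n + 1) ∧ WordOf (withOrigin p0 p) n w ∧ OriginQ1 p0 p n }

/-- `P^(3)(ξ)`: pin words of `ξ` whose origin lies in quadrant 3 w.r.t. the points of `ξ`. -/
def PinWordsQ3 {n : ℕ} (ξ : Equiv.Perm (Fin n)) : Set (List Letter) :=
  { w | ∃ (p : ℕ → Point) (p0 : Point), IsPinRepr ξ p ∧
        IsPinSeq (withOrigin p0 p) (n + 1) ∧ WordOf (withOrigin p0 p) n w ∧ OriginQ3 p0 p n }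

/-- The shuffle product of two sequences of sets of words. -/
def ShuffleSeq : List (Set (List Letter)) → List (Set (List Letter)) → Set (List Letter)
  | [], [] => {[]}
  | X :: As, [] => { w | ∃ x ∈ X, ∃ t ∈ ShuffleSeq As [], w = x ++ t }
  | [], Y :: Bs => { w | ∃ y ∈ Y, ∃ t ∈ ShuffleSeq ([] : List (Set (List Letter))) Bs, w = y ++ t }
  | X :: As, Y :: Bs =>
      { w | (∃ x ∈ X, ∃ t ∈ ShuffleSeq As (Y :: Bs), w = x ++ t) ∨
            (∃ y ∈ Y, ∃ t ∈ ShuffleSeq (X :: As) Bs, w = y ++ t) }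
  termination_by A B => A.length + B.length

/-- The `p`-fold repetition `x^p` of the word `x`. -/
def repW (p : ℕ) (x : List Letter) : List Letter := (List.replicate p x).flatten

/-- The points of `ξ` at positions `i` and `j` form an active knight of `ξ`:
they occur (in some order) as the first two pins of some pin representation of `ξ`. -/
def ActiveKnight {k : ℕ} (ξ : Equiv.Perm (Fin k)) (i j : Fin k) : Prop :=
  ∃ (p : ℕ → Point) (f : Fin k ≃ Fin k) (h2 : 2 ≤ k),
    IsPinReprWith ξ p f ∧
    ((f ⟨0, by omega⟩ = i ∧ f ⟨1, by omega⟩ = j) ∨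
     (f ⟨0, by omega⟩ = j ∧ f ⟨1, by omega⟩ = i))

/-- The points at positions `i`, `j` are in horizontal knight position. -/
def KnightH {k : ℕ} (ξ : Equiv.Perm (Fin k)) (i j : Fin k) : Prop :=
  (i.val + 2 = j.val ∨ j.val + 2 = i.val) ∧
  ((ξ i).val + 1 = (ξ j).val ∨ (ξ j).val + 1 = (ξ i).val)

/-- The points at positions `i`, `j` are in vertical knight position. -/
def KnightV {k : ℕ} (ξ : Equiv.Perm (Fin k)) (i j : Fin k) : Prop :=
  (i.val + 1 = j.val ∨ j.val + 1 = i.val) ∧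
  ((ξ i).val + 2 = (ξ j).val ∨ (ξ j).val + 2 = (ξ i).val)

inductive KType : Type
  | H | V

def KnightOfType {k : ℕ} (t : KType) (ξ : Equiv.Perm (Fin k)) (i j : Fin k) : Prop :=
  match t with
  | .H => KnightH ξ i j
  | .V => KnightV ξ i j

/-- The increasing oscillation `ξ` has type `(x, y)`: its lower-left active knight
(the one containing the leftmost point) has knight-position type `x` and its
upper-right active knight (the one containing the rightmost point) has type `y`. -/
def HasOscType {k : ℕ} (ξ : Equiv.Perm (Fin k)) (x y : KType) : Prop :=
  ∃ i j i' j' : Fin k, ActiveKnight ξ i j ∧ ActiveKnight ξ i' j' ∧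
    i.val = 0 ∧ j'.val + 1 = k ∧ KnightOfType x ξ i j ∧ KnightOfType y ξ i' j'

/-- The permutation 21. -/
def perm21 : Equiv.Perm (Fin 2) := Equiv.swap 0 1

/-- The permutation 12. -/
def perm12 : Equiv.Perm (Fin 2) := Equiv.refl (Fin 2)

def EndsH (w : List Letter) : Prop := w.getLast? = some Letter.R ∨ w.getLast? = some Letter.L
def EndsV (w : List Letter) : Prop := w.getLast? = some Letter.U ∨ w.getLast? = some Letter.D

/-- `Q⁻`: quasi-strict pin words of 21. -/
def Qminus : Set (List Letter) := { w | w ∈ PinWords perm21 ∧ IsQuasiStrict w }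
/-- `S⁻_H`: strict pin words of 21 ending with R or L. -/
def SminusH : Set (List Letter) := { w | w ∈ PinWords perm21 ∧ IsStrict w ∧ EndsH w }
/-- `S⁻_V`: strict pin words of 21 ending with U or D. -/
def SminusV : Set (List Letter) := { w | w ∈ PinWords perm21 ∧ IsStrict w ∧ EndsV w }
/-- `Q⁺`: quasi-strict pin words of 12. -/
def Qplus : Set (List Letter) := { w | w ∈ PinWords perm12 ∧ IsQuasiStrict w }
/-- `S⁺_H`: strict pin words of 12 ending with R or L. -/
def SplusH : Set (List Letter) := { w | w ∈ PinWords perm12 ∧ IsStrict w ∧ EndsH w }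
/-- `S⁺_V`: strict pin words of 12 ending with U or D. -/
def SplusV : Set (List Letter) := { w | w ∈ PinWords perm12 ∧ IsStrict w ∧ EndsV w }

/-- `P^mix(ξ_i, ξ_j)` for `τ = ⊕[ξ_i, ξ_j]` with `|ξ_i| = s1`: pin words associated
with a pin representation of `τ` reading one of the two children in two pieces. -/
def Pmix {m : ℕ} (τ : Equiv.Perm (Fin m)) (s1 : ℕ) : Set (List Letter) :=
  { w | ∃ (p : ℕ → Point) (p0 : Point) (f : Fin m ≃ Fin m),
      IsPinReprWith τ p f ∧ IsPinSeq (withOrigin p0 p) (m + 1) ∧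
      WordOf (withOrigin p0 p) m w ∧
      (ReadInPieces { a : Fin m | (f a).val < s1 } 2 ∨
       ReadInPieces { a : Fin m | s1 ≤ (f a).val } 2) }

/-- The set of words `{13, 23, 33, 43, 1D, 4D}`. -/
def W13D : Set (List Letter) :=
  {[Letter.n1, Letter.n3], [Letter.n2, Letter.n3], [Letter.n3, Letter.n3],
   [Letter.n4, Letter.n3], [Letter.n1, Letter.D], [Letter.n4, Letter.D]}

/-- The set of words `{13, 23, 33, 43, 1L, 2L}`. -/
def W13L : Set (List Letter) :=
  {[Letter.n1, Letter.n3], [Letter.n2, Letter.n3], [Letter.n3, Letter.n3],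
   [Letter.n4, Letter.n3], [Letter.n1, Letter.L], [Letter.n2, Letter.L]}

/-- `M_2 = {UR, UL, DR, DL, RU, RD, LU, LD}`. -/
def M2Set : Set (List Letter) :=
  {[Letter.U, Letter.R], [Letter.U, Letter.L], [Letter.D, Letter.R], [Letter.D, Letter.L],
   [Letter.R, Letter.U], [Letter.R, Letter.D], [Letter.L, Letter.U], [Letter.L, Letter.D]}

/-- `E^s_π`: the words `φ(u)` for `u ∈ P(π)` strict. -/
def EsSet {n : ℕ} (π : Equiv.Perm (Fin n)) : Set (List Letter) :=
  { v | ∃ u ∈ PinWords π, IsStrict u ∧ v ∈ phiSet u }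

/-- `E^qs_π`: the words `φ(u^(2))` for `u = u^(1)u^(2) ∈ P(π)` quasi-strict. -/
def EqsSet {n : ℕ} (π : Equiv.Perm (Fin n)) : Set (List Letter) :=
  { v | ∃ u ∈ PinWords π, IsQuasiStrict u ∧ ∃ u1 u2, IsSNLD u [u1, u2] ∧ v ∈ phiSet u2 }


/-! ### Auxiliary development for Statement 8 -/

section Stmt8Aux

/-- A complete witness that `w` is a pin word of `α`. -/
structure Wit (n : ℕ) (α : Equiv.Perm (Fin n)) (w : List Letter) : Type where
  p : ℕ → Point
  p0 : Point
  f : Fin n ≃ Fin n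
  hrepr : IsPinReprWith α p f
  hseq : IsPinSeq (withOrigin p0 p) (n + 1)
  hword : WordOf (withOrigin p0 p) n w

namespace Wit

variable {n : ℕ} {α : Equiv.Perm (Fin n)} {w : List Letter} (W : Wit n α w)


/-- The pin sequence with origin. -/
def q : ℕ → Point := withOrigin W.p0 W.p

/-- Position (x-rank) of the pin read at time `s`, as a natural number. -/
def Po (s : ℕ) : ℕ := if h : s < n then (W.f ⟨s, h⟩).val else 0

/-- Value (y-rank) of the pin read at time `s`, as a natural number. -/
def Va (s : ℕ) : ℕ := if h : s < n then (α (W.f ⟨s, h⟩)).val else 0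

lemma q_succ (s : ℕ) : W.q (s + 1) = W.p s := rfl

lemma hlen (W : Wit n α w) : w.length = n := W.hword.1

lemma hletter {i : ℕ} (hi : i < n) : LetterIs W.q (i + 1) (w.getD i Letter.U) :=
  W.hword.2 i hi

lemma Po_lt (s : ℕ) (hs : s < n) : W.Po s < n := by
  simp only [Po, dif_pos hs]; exact (W.f ⟨s, hs⟩).isLt

lemma Va_lt (s : ℕ) (hs : s < n) : W.Va s < n := by
  simp only [Va, dif_pos hs]; exact (α (W.f ⟨s, hs⟩)).isLt

lemma x_iff {s t : ℕ} (hs : s < n) (ht : t < n) :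
    ((W.p s).1 < (W.p t).1) ↔ W.Po s < W.Po t := by
  have h := (W.hrepr.2 ⟨s, hs⟩ ⟨t, ht⟩).1
  simp only [Po, dif_pos hs, dif_pos ht]
  exact h.trans (Fin.lt_iff_val_lt_val)

lemma y_iff {s t : ℕ} (hs : s < n) (ht : t < n) :
    ((W.p s).2 < (W.p t).2) ↔ W.Va s < W.Va t := by
  have h := (W.hrepr.2 ⟨s, hs⟩ ⟨t, ht⟩).2
  simp only [Va, dif_pos hs, dif_pos ht]
  exact h.trans (Fin.lt_iff_val_lt_val)

lemma Po_inj {s t : ℕ} (hs : s < n) (ht : t < n) (h : W.Po s = W.Po t) : s = t := by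
  simp only [Po, dif_pos hs, dif_pos ht] at h
  have h3 := W.f.injective (Fin.val_injective h)
  exact congrArg Fin.val h3

lemma Va_inj {s t : ℕ} (hs : s < n) (ht : t < n) (h : W.Va s = W.Va t) : s = t := by
  simp only [Va, dif_pos hs, dif_pos ht] at h
  have h2 := α.injective (Fin.val_injective h)
  have h3 := W.f.injective h2
  exact congrArg Fin.val h3

lemma Po_surj {k : ℕ} (hk : k < n) : ∃ s, s < n ∧ W.Po s = k := by
  refine ⟨(W.f.symm ⟨k, hk⟩).val, (W.f.symm ⟨k, hk⟩).isLt, ?_⟩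
  simp [Po, dif_pos (W.f.symm ⟨k, hk⟩).isLt]

lemma Va_surj {k : ℕ} (hk : k < n) : ∃ s, s < n ∧ W.Va s = k := by
  refine ⟨(W.f.symm (α.symm ⟨k, hk⟩)).val, (W.f.symm _).isLt, ?_⟩
  simp [Va, dif_pos (W.f.symm (α.symm ⟨k, hk⟩)).isLt]

lemma x_ne {i j : ℕ} (hi : i < n + 1) (hj : j < n + 1) (hij : i ≠ j) :
    (W.q i).1 ≠ (W.q j).1 := (W.hseq.1 i hi j hj hij).1

lemma y_ne {i j : ℕ} (hi : i < n + 1) (hj : j < n + 1) (hij : i ≠ j) :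
    (W.q i).2 ≠ (W.q j).2 := (W.hseq.1 i hi j hj hij).2

/-- "Between" pattern: `g t` lies strictly between `g (t-1)` and all `g s`, `s < t-1`. -/
def BetN (g : ℕ → ℕ) (t : ℕ) : Prop :=
  (g (t - 1) < g t ∧ ∀ s < t - 1, g t < g s) ∨
  (g t < g (t - 1) ∧ ∀ s < t - 1, g s < g t)

lemma sepR (ht1 : 1 ≤ t) (ht : t < n) (hc : w.getD t Letter.U = Letter.R) :
    RightAll W.q (t + 1) ∧ HLineSep W.q (t + 1) := by
  have h := W.hletter ht
  rw [hc] at h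
  obtain ⟨-, hsep, hall⟩ := h
  refine ⟨hall, ?_⟩
  rcases hsep with hv | hh
  · exfalso
    simp only [VLineSep, Nat.add_sub_cancel] at hv
    rcases hv with ⟨_, h2⟩ | ⟨h1, _⟩
    · exact absurd (hall 0 (by omega)) (not_lt.2 (le_of_lt (h2 0 (by omega))))
    · exact absurd (hall t (by omega)) (not_lt.2 (le_of_lt h1))
  · exact hh

lemma sepL (ht1 : 1 ≤ t) (ht : t < n) (hc : w.getD t Letter.U = Letter.L) :
    LeftAll W.q (t + 1) ∧ HLineSep W.q (t + 1) := by
  have h := W.hletter ht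
  rw [hc] at h
  obtain ⟨-, hsep, hall⟩ := h
  refine ⟨hall, ?_⟩
  rcases hsep with hv | hh
  · exfalso
    simp only [VLineSep, Nat.add_sub_cancel] at hv
    rcases hv with ⟨h1, _⟩ | ⟨_, h2⟩
    · exact absurd (hall t (by omega)) (not_lt.2 (le_of_lt h1))
    · exact absurd (hall 0 (by omega)) (not_lt.2 (le_of_lt (h2 0 (by omega))))
  · exact hh

lemma sepU (ht1 : 1 ≤ t) (ht : t < n) (hc : w.getD t Letter.U = Letter.U) :
    AboveAll W.q (t + 1) ∧ VLineSep W.q (t + 1) := by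
  have h := W.hletter ht
  rw [hc] at h
  obtain ⟨-, hsep, hall⟩ := h
  refine ⟨hall, ?_⟩
  rcases hsep with hv | hh
  · exact hv
  · exfalso
    simp only [HLineSep, Nat.add_sub_cancel] at hh
    rcases hh with ⟨_, h2⟩ | ⟨h1, _⟩
    · exact absurd (hall 0 (by omega)) (not_lt.2 (le_of_lt (h2 0 (by omega))))
    · exact absurd (hall t (by omega)) (not_lt.2 (le_of_lt h1))

lemma sepD (ht1 : 1 ≤ t) (ht : t < n) (hc : w.getD t Letter.U = Letter.D) :
    BelowAll W.q (t + 1) ∧ VLineSep W.q (t + 1) := by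
  have h := W.hletter ht
  rw [hc] at h
  obtain ⟨-, hsep, hall⟩ := h
  refine ⟨hall, ?_⟩
  rcases hsep with hv | hh
  · exact hv
  · exfalso
    simp only [HLineSep, Nat.add_sub_cancel] at hh
    rcases hh with ⟨h1, _⟩ | ⟨_, h2⟩
    · exact absurd (hall t (by omega)) (not_lt.2 (le_of_lt h1))
    · exact absurd (hall 0 (by omega)) (not_lt.2 (le_of_lt (h2 0 (by omega))))

/-- A `R` pin: position beyond all previous, value between previous pin and the rest. -/
lemma dirR (ht1 : 1 ≤ t) (ht : t < n) (hc : w.getD t Letter.U = Letter.R) :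
    (∀ s < t, W.Po s < W.Po t) ∧ BetN W.Va t := by
  obtain ⟨hall, hh⟩ := W.sepR ht1 ht hc
  obtain ⟨u, rfl⟩ : ∃ u, t = u + 1 := ⟨t - 1, by omega⟩
  constructor
  · intro s hs
    exact (W.x_iff (by omega) ht).1 (hall (s + 1) (by omega))
  · simp only [HLineSep, Nat.add_sub_cancel] at hh
    simp only [BetN, Nat.add_sub_cancel]
    rcases hh with ⟨h1, h2⟩ | ⟨h1, h2⟩
    · left
      refine ⟨(W.y_iff (by omega) ht).1 h1, fun s hs => (W.y_iff ht (by omega)).1 (h2 (s+1) (by omega))⟩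
    · right
      refine ⟨(W.y_iff ht (by omega)).1 h1, fun s hs => (W.y_iff (by omega) ht).1 (h2 (s+1) (by omega))⟩

/-- A `L` pin. -/
lemma dirL (ht1 : 1 ≤ t) (ht : t < n) (hc : w.getD t Letter.U = Letter.L) :
    (∀ s < t, W.Po t < W.Po s) ∧ BetN W.Va t := by
  obtain ⟨hall, hh⟩ := W.sepL ht1 ht hc
  obtain ⟨u, rfl⟩ : ∃ u, t = u + 1 := ⟨t - 1, by omega⟩
  constructor
  · intro s hs
    exact (W.x_iff ht (by omega)).1 (hall (s + 1) (by omega))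
  · simp only [HLineSep, Nat.add_sub_cancel] at hh
    simp only [BetN, Nat.add_sub_cancel]
    rcases hh with ⟨h1, h2⟩ | ⟨h1, h2⟩
    · left
      refine ⟨(W.y_iff (by omega) ht).1 h1, fun s hs => (W.y_iff ht (by omega)).1 (h2 (s+1) (by omega))⟩
    · right
      refine ⟨(W.y_iff ht (by omega)).1 h1, fun s hs => (W.y_iff (by omega) ht).1 (h2 (s+1) (by omega))⟩

/-- A `U` pin. -/
lemma dirU (ht1 : 1 ≤ t) (ht : t < n) (hc : w.getD t Letter.U = Letter.U) :
    (∀ s < t, W.Va s < W.Va t) ∧ BetN W.Po t := by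
  obtain ⟨hall, hh⟩ := W.sepU ht1 ht hc
  obtain ⟨u, rfl⟩ : ∃ u, t = u + 1 := ⟨t - 1, by omega⟩
  constructor
  · intro s hs
    exact (W.y_iff (by omega) ht).1 (hall (s + 1) (by omega))
  · simp only [VLineSep, Nat.add_sub_cancel] at hh
    simp only [BetN, Nat.add_sub_cancel]
    rcases hh with ⟨h1, h2⟩ | ⟨h1, h2⟩
    · left
      refine ⟨(W.x_iff (by omega) ht).1 h1, fun s hs => (W.x_iff ht (by omega)).1 (h2 (s+1) (by omega))⟩
    · right
      refine ⟨(W.x_iff ht (by omega)).1 h1, fun s hs => (W.x_iff (by omega) ht).1 (h2 (s+1) (by omega))⟩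

/-- A `D` pin. -/
lemma dirD (ht1 : 1 ≤ t) (ht : t < n) (hc : w.getD t Letter.U = Letter.D) :
    (∀ s < t, W.Va t < W.Va s) ∧ BetN W.Po t := by
  obtain ⟨hall, hh⟩ := W.sepD ht1 ht hc
  obtain ⟨u, rfl⟩ : ∃ u, t = u + 1 := ⟨t - 1, by omega⟩
  constructor
  · intro s hs
    exact (W.y_iff ht (by omega)).1 (hall (s + 1) (by omega))
  · simp only [VLineSep, Nat.add_sub_cancel] at hh
    simp only [BetN, Nat.add_sub_cancel]
    rcases hh with ⟨h1, h2⟩ | ⟨h1, h2⟩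
    · left
      refine ⟨(W.x_iff (by omega) ht).1 h1, fun s hs => (W.x_iff ht (by omega)).1 (h2 (s+1) (by omega))⟩
    · right
      refine ⟨(W.x_iff ht (by omega)).1 h1, fun s hs => (W.x_iff (by omega) ht).1 (h2 (s+1) (by omega))⟩

end Wit

/-- If every element outside `S` is beyond all of `S` (in the injective ranking `g`),
then the `g`-values of `S` form an interval. -/
lemma exists_window {N : ℕ} (g : Fin N → ℕ) (hinj : Function.Injective g)
    (hlt : ∀ a, g a < N) (hsurj : ∀ k, k < N → ∃ a, g a = k) (S : Finset (Fin N))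
    (hne : S.Nonempty)
    (hb : ∀ a ∉ S, (∀ b ∈ S, g b < g a) ∨ (∀ b ∈ S, g a < g b)) :
    ∃ lo, ∀ a, (lo ≤ g a ∧ g a < lo + S.card) ↔ a ∈ S := by
  classical
  set B := S.image g with hB
  have hBne : B.Nonempty := hne.image g
  set lo := B.min' hBne with hlo
  set hi := B.max' hBne with hhi
  have hloB : lo ∈ B := B.min'_mem hBne
  have hhiB : hi ∈ B := B.max'_mem hBne
  have hiN : hi < N := by
    obtain ⟨b, -, hbe⟩ := Finset.mem_image.1 hhiB
    exact hbe ▸ hlt b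
  have hmem : ∀ c, lo ≤ c → c ≤ hi → c ∈ B := by
    intro c h1 h2
    obtain ⟨a, rfl⟩ := hsurj c (lt_of_le_of_lt h2 hiN)
    by_cases haS : a ∈ S
    · exact Finset.mem_image_of_mem g haS
    · rcases hb a haS with hcase | hcase
      · obtain ⟨b, hbS, hbe⟩ := Finset.mem_image.1 hhiB
        exact absurd h2 (not_le.2 (hbe ▸ hcase b hbS))
      · obtain ⟨b, hbS, hbe⟩ := Finset.mem_image.1 hloB
        exact absurd h1 (not_le.2 (hbe ▸ hcase b hbS))
  have hcard : B.card = S.card := Finset.card_image_of_injective S hinj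
  have hBIcc : B = Finset.Icc lo hi := by
    apply Finset.Subset.antisymm
    · intro c hc
      exact Finset.mem_Icc.2 ⟨B.min'_le c hc, B.le_max' c hc⟩
    · intro c hc
      obtain ⟨h1, h2⟩ := Finset.mem_Icc.1 hc
      exact hmem c h1 h2
  have hlohi : lo ≤ hi := B.min'_le hi hhiB
  have hcard2 : S.card = hi + 1 - lo := by
    rw [← hcard, hBIcc, Nat.card_Icc]
  refine ⟨lo, fun a => ?_⟩
  constructor
  · rintro ⟨h1, h2⟩
    have : g a ∈ B := hmem (g a) h1 (by omega)
    obtain ⟨b, hbS, hbe⟩ := Finset.mem_image.1 this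
    exact (hinj hbe) ▸ hbS
  · intro haS
    have h1 : lo ≤ g a := B.min'_le (g a) (Finset.mem_image_of_mem g haS)
    have h2 : g a ≤ hi := B.le_max' (g a) (Finset.mem_image_of_mem g haS)
    exact ⟨h1, by omega⟩

namespace Wit

variable {n : ℕ} {α : Equiv.Perm (Fin n)} {w : List Letter} (W : Wit n α w)

/-- If the pin read at time `i` is independent (numeral letter) with `i ≥ 2`, then
every pin read at time `t ≥ i` is, in both coordinates, beyond all pins read
before time `i`. -/
lemma both_beyond {i : ℕ} (h2 : 2 ≤ i) (hi : i < n)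
    (hnum : (w.getD i Letter.U).isNum = true) :
    ∀ t, i ≤ t → t < n →
      ((∀ s < i, W.Po s < W.Po t) ∨ (∀ s < i, W.Po t < W.Po s)) ∧
      ((∀ s < i, W.Va s < W.Va t) ∨ (∀ s < i, W.Va t < W.Va s)) := by
  intro t hit ht
  rcases eq_or_lt_of_le hit with rfl | hlt
  · -- `t = i` : use the numeral letter itself
    have h := W.hletter ht
    have hxy : (RightAll W.q (i+1) ∨ LeftAll W.q (i+1)) ∧
        (AboveAll W.q (i+1) ∨ BelowAll W.q (i+1)) := by
      cases hcget : w.getD i Letter.U with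
      | n1 => rw [hcget] at h; exact ⟨Or.inl h.2.1, Or.inl h.2.2⟩
      | n2 => rw [hcget] at h; exact ⟨Or.inr h.2.1, Or.inl h.2.2⟩
      | n3 => rw [hcget] at h; exact ⟨Or.inr h.2.1, Or.inr h.2.2⟩
      | n4 => rw [hcget] at h; exact ⟨Or.inl h.2.1, Or.inr h.2.2⟩
      | U => rw [hcget] at hnum; simp [Letter.isNum] at hnum
      | D => rw [hcget] at hnum; simp [Letter.isNum] at hnum
      | L => rw [hcget] at hnum; simp [Letter.isNum] at hnum
      | R => rw [hcget] at hnum; simp [Letter.isNum] at hnum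
    constructor
    · rcases hxy.1 with hr | hl
      · exact Or.inl fun s hs => (W.x_iff (by omega) ht).1 (hr (s+1) (by omega))
      · exact Or.inr fun s hs => (W.x_iff ht (by omega)).1 (hl (s+1) (by omega))
    · rcases hxy.2 with hr | hl
      · exact Or.inl fun s hs => (W.y_iff (by omega) ht).1 (hr (s+1) (by omega))
      · exact Or.inr fun s hs => (W.y_iff ht (by omega)).1 (hl (s+1) (by omega))
  · -- `t > i`
    obtain ⟨hout, hsep⟩ := W.hseq.2 (t+1) (by omega) (by omega)
    rcases hsep with hsep | hind
    · rcases hsep with hv | hh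
      · -- vertical separation
        simp only [VLineSep, Nat.add_sub_cancel] at hv
        constructor
        · rcases hv with ⟨h1, hall⟩ | ⟨h1, hall⟩
          · exact Or.inr fun s hs =>
              (W.x_iff ht (by omega)).1 (hall (s+1) (by omega))
          · exact Or.inl fun s hs =>
              (W.x_iff (by omega) ht).1 (hall (s+1) (by omega))
        · rcases hout with hr | hl | ha | hb
          · exfalso
            rcases hv with ⟨h1, hall⟩ | ⟨h1, hall⟩
            · exact absurd (hr 0 (by omega)) (not_lt.2 (le_of_lt (hall 0 (by omega))))
            · exact absurd (hr t (by omega)) (not_lt.2 (le_of_lt h1))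
          · exfalso
            rcases hv with ⟨h1, hall⟩ | ⟨h1, hall⟩
            · exact absurd (hl t (by omega)) (not_lt.2 (le_of_lt h1))
            · exact absurd (hl 0 (by omega)) (not_lt.2 (le_of_lt (hall 0 (by omega))))
          · exact Or.inl fun s hs => (W.y_iff (by omega) ht).1 (ha (s+1) (by omega))
          · exact Or.inr fun s hs => (W.y_iff ht (by omega)).1 (hb (s+1) (by omega))
      · -- horizontal separation
        simp only [HLineSep, Nat.add_sub_cancel] at hh
        constructor
        · rcases hout with hr | hl | ha | hb
          · exact Or.inl fun s hs => (W.x_iff (by omega) ht).1 (hr (s+1) (by omega))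
          · exact Or.inr fun s hs => (W.x_iff ht (by omega)).1 (hl (s+1) (by omega))
          · exfalso
            rcases hh with ⟨h1, hall⟩ | ⟨h1, hall⟩
            · exact absurd (ha 0 (by omega)) (not_lt.2 (le_of_lt (hall 0 (by omega))))
            · exact absurd (ha t (by omega)) (not_lt.2 (le_of_lt h1))
          · exfalso
            rcases hh with ⟨h1, hall⟩ | ⟨h1, hall⟩
            · exact absurd (hb t (by omega)) (not_lt.2 (le_of_lt h1))
            · exact absurd (hb 0 (by omega)) (not_lt.2 (le_of_lt (hall 0 (by omega))))
        · rcases hh with ⟨h1, hall⟩ | ⟨h1, hall⟩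
          · exact Or.inr fun s hs =>
              (W.y_iff ht (by omega)).1 (hall (s+1) (by omega))
          · exact Or.inl fun s hs =>
              (W.y_iff (by omega) ht).1 (hall (s+1) (by omega))
    · -- independence
      obtain ⟨hx, hy⟩ := hind
      constructor
      · by_contra hcon
        push_neg at hcon
        obtain ⟨⟨s1, hs1, hle1⟩, ⟨s2, hs2, hle2⟩⟩ := hcon
        have hne1 : (W.q (t+1)).1 ≠ (W.q (s1+1)).1 :=
          W.x_ne (by omega) (by omega) (by omega)
        have h1 : W.Po t < W.Po s1 := lt_of_le_of_ne hle1 (by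
          intro he
          exact absurd (W.Po_inj ht (by omega) he) (by omega))
        have h2 : W.Po s2 < W.Po t := lt_of_le_of_ne hle2 (by
          intro he
          exact absurd (W.Po_inj (by omega) ht he) (by omega))
        exact hx ⟨⟨s2+1, by omega, (W.x_iff (by omega) ht).2 h2⟩,
          ⟨s1+1, by omega, (W.x_iff ht (by omega)).2 h1⟩⟩
      · by_contra hcon
        push_neg at hcon
        obtain ⟨⟨s1, hs1, hle1⟩, ⟨s2, hs2, hle2⟩⟩ := hcon
        have h1 : W.Va t < W.Va s1 := lt_of_le_of_ne hle1 (by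
          intro he
          exact absurd (W.Va_inj ht (by omega) he) (by omega))
        have h2 : W.Va s2 < W.Va t := lt_of_le_of_ne hle2 (by
          intro he
          exact absurd (W.Va_inj (by omega) ht he) (by omega))
        exact hy ⟨⟨s2+1, by omega, (W.y_iff (by omega) ht).2 h2⟩,
          ⟨s1+1, by omega, (W.y_iff ht (by omega)).2 h1⟩⟩

/-- In a simple permutation, no letter from the third position on is a numeral. -/
lemma no_num_high (W : Wit n α w) (hs : IsSimplePerm α) {i : ℕ} (h2 : 2 ≤ i) (hi : i < n) :
    (w.getD i Letter.U).isNum = false := by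
  by_contra h
  have hnum : (w.getD i Letter.U).isNum = true := by simpa using h
  have hbey := W.both_beyond h2 hi hnum
  classical
  set S0 : Finset (Fin n) := (Finset.range i).attachFin
    (fun m hm => lt_trans (Finset.mem_range.1 hm) hi) with hS0
  set S : Finset (Fin n) := S0.image W.f with hS
  have hmemS0 : ∀ a : Fin n, a ∈ S0 ↔ a.val < i := by
    intro a; simp [hS0, Finset.mem_attachFin]
  have hcardS : S.card = i := by
    rw [hS, Finset.card_image_of_injective _ W.f.injective, hS0,
      Finset.card_attachFin, Finset.card_range]
  have hne : S.Nonempty := by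
    rw [← Finset.card_pos, hcardS]; omega
  have hmemS : ∀ a : Fin n, a ∈ S ↔ (W.f.symm a).val < i := by
    intro a
    simp only [hS, Finset.mem_image]
    constructor
    · rintro ⟨u, hu, rfl⟩
      rw [Equiv.symm_apply_apply]
      exact (hmemS0 u).1 hu
    · intro hlt
      exact ⟨W.f.symm a, (hmemS0 _).2 hlt, W.f.apply_symm_apply a⟩
  have hPo_val : ∀ (u : Fin n), W.Po u.val = (W.f u).val := by
    intro u; simp [Wit.Po, dif_pos u.isLt]
  have hVa_val : ∀ (u : Fin n), W.Va u.val = (α (W.f u)).val := by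
    intro u; simp [Wit.Va, dif_pos u.isLt]
  -- the position window
  obtain ⟨lo, hwin⟩ := exists_window (fun a : Fin n => a.val) Fin.val_injective
    (fun a => a.isLt) (fun k hk => ⟨⟨k, hk⟩, rfl⟩) S hne (by
      intro a haS
      have hta : i ≤ (W.f.symm a).val := not_lt.1 (fun hc => haS ((hmemS a).2 hc))
      have hfa : W.f (W.f.symm a) = a := W.f.apply_symm_apply a
      rcases (hbey (W.f.symm a).val hta (W.f.symm a).isLt).1 with hcase | hcase
      · left
        rintro b hbS
        obtain ⟨u, hu, rfl⟩ := Finset.mem_image.1 hbS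
        have := hcase u.val ((hmemS0 u).1 hu)
        rw [hPo_val, hPo_val, hfa] at this
        exact this
      · right
        rintro b hbS
        obtain ⟨u, hu, rfl⟩ := Finset.mem_image.1 hbS
        have := hcase u.val ((hmemS0 u).1 hu)
        rw [hPo_val, hPo_val, hfa] at this
        exact this)
  -- the value window
  obtain ⟨vlo, hvwin⟩ := exists_window (fun a : Fin n => (α a).val)
    (fun a b hab => α.injective (Fin.val_injective hab))
    (fun a => (α a).isLt) (fun k hk => ⟨α.symm ⟨k, hk⟩, by simp⟩) S hne (by
      intro a haS
      have hta : i ≤ (W.f.symm a).val := not_lt.1 (fun hc => haS ((hmemS a).2 hc))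
      have hfa : W.f (W.f.symm a) = a := W.f.apply_symm_apply a
      rcases (hbey (W.f.symm a).val hta (W.f.symm a).isLt).2 with hcase | hcase
      · left
        rintro b hbS
        obtain ⟨u, hu, rfl⟩ := Finset.mem_image.1 hbS
        have := hcase u.val ((hmemS0 u).1 hu)
        rw [hVa_val, hVa_val, hfa] at this
        exact this
      · right
        rintro b hbS
        obtain ⟨u, hu, rfl⟩ := Finset.mem_image.1 hbS
        have := hcase u.val ((hmemS0 u).1 hu)
        rw [hVa_val, hVa_val, hfa] at this
        exact this)
  rw [hcardS] at hwin hvwin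
  -- `lo + i ≤ n`
  have hloin : lo + i ≤ n := by
    have hsub : ∀ a ∈ S, a.val ∈ Finset.Ico lo n := by
      intro a haS
      exact Finset.mem_Ico.2 ⟨((hwin a).2 haS).1, a.isLt⟩
    have hcle : S.card ≤ (Finset.Ico lo n).card :=
      Finset.card_le_card_of_injOn (fun a => a.val) hsub
        (fun a _ b _ hab => Fin.val_injective hab)
    rw [hcardS, Nat.card_Ico] at hcle
    omega
  have hblock : IsBlockOf α lo i := by
    refine ⟨hloin, vlo, fun a => ?_⟩
    rw [hwin a, hvwin a]
  rcases hs.2 lo i hblock with h1 | h1 <;> omega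

end Wit

/-- Beyond vs. between: impossible on the same coordinate. -/
lemma pure_cross {g g' : ℕ → ℕ} {t : ℕ} (h2 : 2 ≤ t)
    (hc : g t = g' t)
    (hset : ∀ b, (∃ s, s < t ∧ g s = b) ↔ (∃ s, s < t ∧ g' s = b))
    (hginj : ∀ s s', s < t → s' < t → g s = g s' → s = s')
    (hbey : (∀ s < t, g s < g t) ∨ (∀ s < t, g t < g s))
    (hbet : (g' (t-1) < g' t ∧ ∀ s < t-1, g' t < g' s) ∨
            (g' t < g' (t-1) ∧ ∀ s < t-1, g' s < g' t)) : False := by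
  obtain ⟨s₀, hs₀, hgs₀⟩ := (hset (g' (t-1))).2 ⟨t-1, by omega, rfl⟩
  obtain ⟨a₀, ha₀, hga₀⟩ := (hset (g 0)).1 ⟨0, by omega, rfl⟩
  obtain ⟨a₁, ha₁, hga₁⟩ := (hset (g 1)).1 ⟨1, by omega, rfl⟩
  rcases hbet with ⟨h1, hall⟩ | ⟨h1, hall⟩
  · rcases hbey with hb | hb
    · -- all g s < g t and g' t < g' s for s < t-1
      have ha₀' : a₀ = t - 1 := by
        by_contra hne
        have := hall a₀ (by omega)
        have := hb 0 (by omega)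
        omega
      have ha₁' : a₁ = t - 1 := by
        by_contra hne
        have := hall a₁ (by omega)
        have := hb 1 (by omega)
        omega
      have : g 0 = g 1 := by rw [← hga₀, ← hga₁, ha₀', ha₁']
      have := hginj 0 1 (by omega) (by omega) this
      omega
    · have := hb s₀ hs₀
      omega
  · rcases hbey with hb | hb
    · have := hb s₀ hs₀
      omega
    · have ha₀' : a₀ = t - 1 := by
        by_contra hne
        have := hall a₀ (by omega)
        have := hb 0 (by omega)
        omega
      have ha₁' : a₁ = t - 1 := by
        by_contra hne
        have := hall a₁ (by omega)
        have := hb 1 (by omega)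
        omega
      have : g 0 = g 1 := by rw [← hga₀, ← hga₁, ha₀', ha₁']
      have := hginj 0 1 (by omega) (by omega) this
      omega

/-- The pivot of a "between" pattern is unique. -/
lemma pure_between_unique {g g' : ℕ → ℕ} {t : ℕ} (h3 : 3 ≤ t)
    (hc : g t = g' t)
    (hset : ∀ b, (∃ s, s < t ∧ g s = b) ↔ (∃ s, s < t ∧ g' s = b))
    (hginj : ∀ s s', s < t → s' < t → g s = g s' → s = s')
    (hbet : (g (t-1) < g t ∧ ∀ s < t-1, g t < g s) ∨
            (g t < g (t-1) ∧ ∀ s < t-1, g s < g t))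
    (hbet' : (g' (t-1) < g' t ∧ ∀ s < t-1, g' t < g' s) ∨
             (g' t < g' (t-1) ∧ ∀ s < t-1, g' s < g' t)) :
    g (t-1) = g' (t-1) := by
  by_contra hne
  obtain ⟨s₀, hs₀, hgs₀⟩ := (hset (g' (t-1))).2 ⟨t-1, by omega, rfl⟩
  have hs₀lt : s₀ < t - 1 := by
    rcases Nat.lt_or_ge s₀ (t-1) with h | h
    · exact h
    · exfalso; have : s₀ = t - 1 := by omega
      rw [this] at hgs₀; exact hne hgs₀
  -- a third element
  have hx : ∃ s₁, s₁ < t - 1 ∧ s₁ ≠ s₀ := by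
    by_cases h : s₀ = 0
    · exact ⟨1, by omega, by omega⟩
    · exact ⟨0, by omega, by omega⟩
  obtain ⟨s₁, hs₁, hs₁ne⟩ := hx
  obtain ⟨s₂, hs₂, hgs₂⟩ := (hset (g s₁)).1 ⟨s₁, by omega, rfl⟩
  have hs₂lt : s₂ < t - 1 := by
    rcases Nat.lt_or_ge s₂ (t-1) with h | h
    · exact h
    · exfalso
      have : s₂ = t - 1 := by omega
      rw [this] at hgs₂
      rw [← hgs₀] at hgs₂
      exact hs₁ne (hginj s₁ s₀ (by omega) (by omega) hgs₂.symm)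
  rcases hbet with ⟨h1, hall⟩ | ⟨h1, hall⟩ <;>
    rcases hbet' with ⟨h1', hall'⟩ | ⟨h1', hall'⟩
  · have := hall s₀ hs₀lt; omega
  · have h4 := hall s₁ hs₁
    have h5 := hall' s₂ hs₂lt
    omega
  · have h4 := hall s₁ hs₁
    have h5 := hall' s₂ hs₂lt
    omega
  · have := hall s₀ hs₀lt; omega

namespace Wit

variable {n : ℕ} {α : Equiv.Perm (Fin n)} {w w' : List Letter}

/-- Coarse classification of a direction pin. -/
lemma classify2 (W : Wit n α w) (hs : IsSimplePerm α) {t : ℕ} (h2 : 2 ≤ t) (ht : t < n) :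
    (((∀ s < t, W.Po s < W.Po t) ∨ (∀ s < t, W.Po t < W.Po s)) ∧ BetN W.Va t) ∨
    (((∀ s < t, W.Va s < W.Va t) ∨ (∀ s < t, W.Va t < W.Va s)) ∧ BetN W.Po t) := by
  have hdir := W.no_num_high hs h2 ht
  cases hcget : w.getD t Letter.U with
  | n1 => rw [hcget] at hdir; simp [Letter.isNum] at hdir
  | n2 => rw [hcget] at hdir; simp [Letter.isNum] at hdir
  | n3 => rw [hcget] at hdir; simp [Letter.isNum] at hdir
  | n4 => rw [hcget] at hdir; simp [Letter.isNum] at hdir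
  | R => obtain ⟨h1, h2'⟩ := W.dirR (by omega) ht hcget; exact Or.inl ⟨Or.inl h1, h2'⟩
  | L => obtain ⟨h1, h2'⟩ := W.dirL (by omega) ht hcget; exact Or.inl ⟨Or.inr h1, h2'⟩
  | U => obtain ⟨h1, h2'⟩ := W.dirU (by omega) ht hcget; exact Or.inr ⟨Or.inl h1, h2'⟩
  | D => obtain ⟨h1, h2'⟩ := W.dirD (by omega) ht hcget; exact Or.inr ⟨Or.inr h1, h2'⟩

lemma po_va_eq (W : Wit n α w) (W' : Wit n α w') {s : ℕ} (hs : s < n) :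
    (W.Po s = W'.Po s) ↔ (W.Va s = W'.Va s) := by
  simp only [Wit.Po, Wit.Va, dif_pos hs]
  constructor
  · intro h
    exact congrArg Fin.val (congrArg α (Fin.val_injective h))
  · intro h
    exact congrArg Fin.val (α.injective (Fin.val_injective h))

lemma hset_po (W : Wit n α w) (W' : Wit n α w') {j : ℕ} (hj : j ≤ n)
    (htail : ∀ s, j ≤ s → s < n → W.Po s = W'.Po s) :
    ∀ b, (∃ s, s < j ∧ W.Po s = b) ↔ (∃ s, s < j ∧ W'.Po s = b) := by
  have half : ∀ b, (∃ s, s < j ∧ W.Po s = b) → (∃ s, s < j ∧ W'.Po s = b) := by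
    rintro b ⟨s, hsj, rfl⟩
    obtain ⟨s', hs'n, hPo'⟩ := W'.Po_surj (W.Po_lt s (by omega))
    refine ⟨s', ?_, hPo'⟩
    by_contra hge
    have hjs' : j ≤ s' := by omega
    have := htail s' hjs' hs'n
    rw [hPo'] at this
    have := W.Po_inj hs'n (by omega) this
    omega
  have half' : ∀ b, (∃ s, s < j ∧ W'.Po s = b) → (∃ s, s < j ∧ W.Po s = b) := by
    rintro b ⟨s, hsj, rfl⟩
    obtain ⟨s', hs'n, hPo'⟩ := W.Po_surj (W'.Po_lt s (by omega))
    refine ⟨s', ?_, hPo'⟩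
    by_contra hge
    have hjs' : j ≤ s' := by omega
    have := htail s' hjs' hs'n
    rw [hPo'] at this
    have := W'.Po_inj hs'n (by omega) this.symm
    omega
  exact fun b => ⟨half b, half' b⟩

lemma hset_va (W : Wit n α w) (W' : Wit n α w') {j : ℕ} (hj : j ≤ n)
    (htail : ∀ s, j ≤ s → s < n → W.Va s = W'.Va s) :
    ∀ b, (∃ s, s < j ∧ W.Va s = b) ↔ (∃ s, s < j ∧ W'.Va s = b) := by
  have half : ∀ b, (∃ s, s < j ∧ W.Va s = b) → (∃ s, s < j ∧ W'.Va s = b) := by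
    rintro b ⟨s, hsj, rfl⟩
    obtain ⟨s', hs'n, hVa'⟩ := W'.Va_surj (W.Va_lt s (by omega))
    refine ⟨s', ?_, hVa'⟩
    by_contra hge
    have := htail s' (by omega) hs'n
    rw [hVa'] at this
    have := W.Va_inj hs'n (by omega) this
    omega
  have half' : ∀ b, (∃ s, s < j ∧ W'.Va s = b) → (∃ s, s < j ∧ W.Va s = b) := by
    rintro b ⟨s, hsj, rfl⟩
    obtain ⟨s', hs'n, hVa'⟩ := W.Va_surj (W'.Va_lt s (by omega))
    refine ⟨s', ?_, hVa'⟩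
    by_contra hge
    have := htail s' (by omega) hs'n
    rw [hVa'] at this
    have := W'.Va_inj hs'n (by omega) this.symm
    omega
  exact fun b => ⟨half b, half' b⟩

/-- Backward determinism: one step. -/
lemma bd_step (hs : IsSimplePerm α) (W : Wit n α w) (W' : Wit n α w') {j : ℕ}
    (h3 : 3 ≤ j) (hj : j < n)
    (htailP : ∀ s, j ≤ s → s < n → W.Po s = W'.Po s) :
    W.Po (j-1) = W'.Po (j-1) := by
  have htailV : ∀ s, j ≤ s → s < n → W.Va s = W'.Va s := fun s h1 h2 =>
    (W.po_va_eq W' h2).1 (htailP s h1 h2)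
  have hcP : W.Po j = W'.Po j := htailP j le_rfl hj
  have hcV : W.Va j = W'.Va j := htailV j le_rfl hj
  have hsetP := W.hset_po W' (le_of_lt hj) htailP
  have hsetV := W.hset_va W' (le_of_lt hj) htailV
  have hinjP : ∀ s s', s < j → s' < j → W.Po s = W.Po s' → s = s' :=
    fun s s' h1 h2 he => W.Po_inj (by omega) (by omega) he
  have hinjP' : ∀ s s', s < j → s' < j → W'.Po s = W'.Po s' → s = s' :=
    fun s s' h1 h2 he => W'.Po_inj (by omega) (by omega) he
  have hinjV : ∀ s s', s < j → s' < j → W.Va s = W.Va s' → s = s' :=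
    fun s s' h1 h2 he => W.Va_inj (by omega) (by omega) he
  rcases W.classify2 hs (by omega) hj with ⟨hbey, hbet⟩ | ⟨hbey, hbet⟩ <;>
    rcases W'.classify2 hs (by omega) hj with ⟨hbey', hbet'⟩ | ⟨hbey', hbet'⟩
  · -- both horizontal: pivot unique on values
    have := pure_between_unique (g := W.Va) (g' := W'.Va) (by omega) hcV hsetV hinjV hbet hbet'
    exact (W.po_va_eq W' (by omega)).2 this
  · exact absurd (pure_cross (by omega) hcP hsetP hinjP hbey hbet') (fun h => h)
  · exfalso
    refine pure_cross (g := W'.Po) (g' := W.Po) (by omega) hcP.symm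
      (fun b => (hsetP b).symm) hinjP' hbey' hbet
  · have := pure_between_unique (g := W.Po) (g' := W'.Po) (by omega) hcP hsetP hinjP hbet hbet'
    exact this

/-- The last pin is determined by its letter. -/
lemma last_pin (hs : IsSimplePerm α) (W : Wit n α w) (W' : Wit n α w')
    (hn4 : 4 ≤ n) (hd : w.getD (n-1) Letter.U = w'.getD (n-1) Letter.U) :
    W.Po (n-1) = W'.Po (n-1) := by
  have hdir := W.no_num_high hs (by omega) (by omega : n - 1 < n)
  cases hcget : w.getD (n-1) Letter.U with
  | n1 => rw [hcget] at hdir; simp [Letter.isNum] at hdir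
  | n2 => rw [hcget] at hdir; simp [Letter.isNum] at hdir
  | n3 => rw [hcget] at hdir; simp [Letter.isNum] at hdir
  | n4 => rw [hcget] at hdir; simp [Letter.isNum] at hdir
  | R =>
    have e1 : W.Po (n-1) = n-1 := by
      obtain ⟨s, hsn, hPo⟩ := W.Po_surj (show n-1 < n by omega)
      rcases Nat.lt_or_ge s (n-1) with hlt | hge
      · have h1 := (W.dirR (by omega) (by omega) hcget).1 s hlt
        have h2 := W.Po_lt (n-1) (by omega)
        omega
      · have : s = n - 1 := by omega
        rw [this] at hPo; exact hPo
    have e2 : W'.Po (n-1) = n-1 := by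
      obtain ⟨s, hsn, hPo⟩ := W'.Po_surj (show n-1 < n by omega)
      rcases Nat.lt_or_ge s (n-1) with hlt | hge
      · have h1 := (W'.dirR (by omega) (by omega) (hd ▸ hcget)).1 s hlt
        have h2 := W'.Po_lt (n-1) (by omega)
        omega
      · have : s = n - 1 := by omega
        rw [this] at hPo; exact hPo
    rw [e1, e2]
  | L =>
    have e1 : W.Po (n-1) = 0 := by
      obtain ⟨s, hsn, hPo⟩ := W.Po_surj (show 0 < n by omega)
      rcases Nat.lt_or_ge s (n-1) with hlt | hge
      · have h1 := (W.dirL (by omega) (by omega) hcget).1 s hlt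
        omega
      · have : s = n - 1 := by omega
        rw [this] at hPo; exact hPo
    have e2 : W'.Po (n-1) = 0 := by
      obtain ⟨s, hsn, hPo⟩ := W'.Po_surj (show 0 < n by omega)
      rcases Nat.lt_or_ge s (n-1) with hlt | hge
      · have h1 := (W'.dirL (by omega) (by omega) (hd ▸ hcget)).1 s hlt
        omega
      · have : s = n - 1 := by omega
        rw [this] at hPo; exact hPo
    rw [e1, e2]
  | U =>
    refine (W.po_va_eq W' (by omega)).2 ?_
    have e1 : W.Va (n-1) = n-1 := by
      obtain ⟨s, hsn, hVa⟩ := W.Va_surj (show n-1 < n by omega)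
      rcases Nat.lt_or_ge s (n-1) with hlt | hge
      · have h1 := (W.dirU (by omega) (by omega) hcget).1 s hlt
        have h2 := W.Va_lt (n-1) (by omega)
        omega
      · have : s = n - 1 := by omega
        rw [this] at hVa; exact hVa
    have e2 : W'.Va (n-1) = n-1 := by
      obtain ⟨s, hsn, hVa⟩ := W'.Va_surj (show n-1 < n by omega)
      rcases Nat.lt_or_ge s (n-1) with hlt | hge
      · have h1 := (W'.dirU (by omega) (by omega) (hd ▸ hcget)).1 s hlt
        have h2 := W'.Va_lt (n-1) (by omega)
        omega
      · have : s = n - 1 := by omega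
        rw [this] at hVa; exact hVa
    rw [e1, e2]
  | D =>
    refine (W.po_va_eq W' (by omega)).2 ?_
    have e1 : W.Va (n-1) = 0 := by
      obtain ⟨s, hsn, hVa⟩ := W.Va_surj (show 0 < n by omega)
      rcases Nat.lt_or_ge s (n-1) with hlt | hge
      · have h1 := (W.dirD (by omega) (by omega) hcget).1 s hlt
        omega
      · have : s = n - 1 := by omega
        rw [this] at hVa; exact hVa
    have e2 : W'.Va (n-1) = 0 := by
      obtain ⟨s, hsn, hVa⟩ := W'.Va_surj (show 0 < n by omega)
      rcases Nat.lt_or_ge s (n-1) with hlt | hge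
      · have h1 := (W'.dirD (by omega) (by omega) (hd ▸ hcget)).1 s hlt
        omega
      · have : s = n - 1 := by omega
        rw [this] at hVa; exact hVa
    rw [e1, e2]

/-- Backward determinism: the whole tail from time 2 on. -/
lemma bd_all (hs : IsSimplePerm α) (W : Wit n α w) (W' : Wit n α w')
    (hn4 : 4 ≤ n) (hd : w.getD (n-1) Letter.U = w'.getD (n-1) Letter.U) :
    ∀ t, 2 ≤ t → t < n → W.Po t = W'.Po t := by
  have main : ∀ k t, t = n - 1 - k → 2 ≤ t → W.Po t = W'.Po t := by
    intro k
    induction k using Nat.strong_induction_on with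
    | _ k IH =>
      intro t hteq h2t
      rcases Nat.eq_zero_or_pos k with rfl | hkpos
      · have : t = n - 1 := by omega
        rw [this]
        exact W.last_pin hs W' hn4 hd
      · have htn : t < n - 1 := by omega
        have step := W.bd_step hs W' (j := t + 1) (by omega) (by omega) ?_
        · simpa using step
        · intro s h1s hsn
          have hk' : n - 1 - s < k := by omega
          exact IH (n - 1 - s) hk' s (by omega) (by omega)
  intro t h2t htn
  exact main (n - 1 - t) t (by omega) h2t

end Wit

/-- x-side of a numeral quadrant. -/
def nxs : Letter → Bool
  | .n1 | .n4 => true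
  | _ => false

/-- y-side of a numeral quadrant. -/
def nys : Letter → Bool
  | .n1 | .n2 => true
  | _ => false

/-- The "free" bit of the first letter of a strict pin word. -/
def sbBit (w : List Letter) : Bool :=
  match w.getD 1 Letter.U with
  | .R | .L => nxs (w.getD 0 Letter.U)
  | _ => nys (w.getD 0 Letter.U)

def dirCode : Letter → Fin 4
  | .R => 0 | .L => 1 | .U => 2 | .D => 3
  | _ => 0

def numCode : Letter → Fin 4
  | .n1 => 0 | .n2 => 1 | .n3 => 2 | .n4 => 3
  | _ => 0

lemma num_ext {c c' : Letter} (h : c.isNum = true) (h' : c'.isNum = true)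
    (hx : nxs c = nxs c') (hy : nys c = nys c') : c = c' := by
  cases c <;> cases c' <;> simp_all [Letter.isNum, nxs, nys]

lemma dirCode_inj {c c' : Letter} (h : c.isNum = false) (h' : c'.isNum = false)
    (he : dirCode c = dirCode c') : c = c' := by
  cases c <;> cases c' <;> simp_all [Letter.isNum, dirCode] <;> omega

lemma numCode_inj {c c' : Letter} (h : c.isNum = true) (h' : c'.isNum = true)
    (he : numCode c = numCode c') : c = c' := by
  cases c <;> cases c' <;> simp_all [Letter.isNum, numCode] <;> omega

namespace Wit

variable {n : ℕ} {α : Equiv.Perm (Fin n)} {w w' : List Letter}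

/-- Fine classification of a direction pin. -/
lemma classify4 (W : Wit n α w) (hs : IsSimplePerm α) {t : ℕ} (h2 : 2 ≤ t) (ht : t < n) :
    (w.getD t Letter.U = Letter.R ∧ (∀ s < t, W.Po s < W.Po t) ∧ BetN W.Va t) ∨
    (w.getD t Letter.U = Letter.L ∧ (∀ s < t, W.Po t < W.Po s) ∧ BetN W.Va t) ∨
    (w.getD t Letter.U = Letter.U ∧ (∀ s < t, W.Va s < W.Va t) ∧ BetN W.Po t) ∨
    (w.getD t Letter.U = Letter.D ∧ (∀ s < t, W.Va t < W.Va s) ∧ BetN W.Po t) := by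
  have hdir := W.no_num_high hs h2 ht
  cases hcget : w.getD t Letter.U with
  | n1 => rw [hcget] at hdir; simp [Letter.isNum] at hdir
  | n2 => rw [hcget] at hdir; simp [Letter.isNum] at hdir
  | n3 => rw [hcget] at hdir; simp [Letter.isNum] at hdir
  | n4 => rw [hcget] at hdir; simp [Letter.isNum] at hdir
  | R => exact Or.inl ⟨rfl, W.dirR (by omega) ht hcget⟩
  | L => exact Or.inr (Or.inl ⟨rfl, W.dirL (by omega) ht hcget⟩)
  | U => exact Or.inr (Or.inr (Or.inl ⟨rfl, W.dirU (by omega) ht hcget⟩))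
  | D => exact Or.inr (Or.inr (Or.inr ⟨rfl, W.dirD (by omega) ht hcget⟩))

/-- Direction letters from time 2 on are determined by the reading order. -/
lemma dirEq (hs : IsSimplePerm α) (W : Wit n α w) (W' : Wit n α w')
    (hPo : ∀ s, s < n → W.Po s = W'.Po s) {t : ℕ} (h2 : 2 ≤ t) (ht : t < n) :
    w.getD t Letter.U = w'.getD t Letter.U := by
  have hVa : ∀ s, s < n → W.Va s = W'.Va s := fun s hsn =>
    (W.po_va_eq W' hsn).1 (hPo s hsn)
  have hsetP : ∀ b, (∃ s, s < t ∧ W.Po s = b) ↔ (∃ s, s < t ∧ W'.Po s = b) := by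
    intro b
    constructor <;> rintro ⟨s, hst, rfl⟩
    · exact ⟨s, hst, (hPo s (by omega)).symm⟩
    · exact ⟨s, hst, hPo s (by omega)⟩
  have hinjP : ∀ s s', s < t → s' < t → W.Po s = W.Po s' → s = s' :=
    fun s s' h1' h2' he => W.Po_inj (by omega) (by omega) he
  have hinjP' : ∀ s s', s < t → s' < t → W'.Po s = W'.Po s' → s = s' :=
    fun s s' h1' h2' he => W'.Po_inj (by omega) (by omega) he
  have hPot := hPo t ht
  have hVat := hVa t ht
  have hPo0 := hPo 0 (by omega)
  have hVa0 := hVa 0 (by omega)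
  have hcross : ∀ (hbey : (∀ s < t, W.Po s < W.Po t) ∨ (∀ s < t, W.Po t < W.Po s))
      (hbet : BetN W'.Po t), False := by
    intro hbey hbet
    have hbey2 : (∀ s < t, W.Po s < W.Po t) ∨ (∀ s < t, W.Po t < W.Po s) := hbey
    exact pure_cross h2 hPot hsetP hinjP hbey2 hbet
  have hcross' : ∀ (hbey : (∀ s < t, W'.Po s < W'.Po t) ∨ (∀ s < t, W'.Po t < W'.Po s))
      (hbet : BetN W.Po t), False := by
    intro hbey hbet
    exact pure_cross h2 hPot.symm (fun b => (hsetP b).symm) hinjP' hbey hbet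
  rcases W.classify4 hs h2 ht with ⟨hd, h1, hb⟩ | ⟨hd, h1, hb⟩ | ⟨hd, h1, hb⟩ | ⟨hd, h1, hb⟩ <;>
    rcases W'.classify4 hs h2 ht with ⟨hd', h1', hb'⟩ | ⟨hd', h1', hb'⟩ | ⟨hd', h1', hb'⟩ | ⟨hd', h1', hb'⟩ <;>
    rw [hd, hd']
  · exfalso; have a := h1 0 (by omega); have b := h1' 0 (by omega); omega
  · exact absurd (hcross (Or.inl h1) hb') id
  · exact absurd (hcross (Or.inl h1) hb') id
  · exfalso; have a := h1 0 (by omega); have b := h1' 0 (by omega); omega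
  · exact absurd (hcross (Or.inr h1) hb') id
  · exact absurd (hcross (Or.inr h1) hb') id
  · exact absurd (hcross' (Or.inl h1') hb) id
  · exact absurd (hcross' (Or.inr h1') hb) id
  · exfalso; have a := h1 0 (by omega); have b := h1' 0 (by omega); omega
  · exact absurd (hcross' (Or.inl h1') hb) id
  · exact absurd (hcross' (Or.inr h1') hb) id
  · exfalso; have a := h1 0 (by omega); have b := h1' 0 (by omega); omega

/-- With the tail equal, the bit `Po 0 < Po 1` determines the first two pins. -/
lemma first_two (W : Wit n α w) (W' : Wit n α w') (hn : 2 ≤ n)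
    (htail : ∀ s, 2 ≤ s → s < n → W.Po s = W'.Po s)
    (hbit : decide (W.Po 0 < W.Po 1) = decide (W'.Po 0 < W'.Po 1)) :
    W.Po 0 = W'.Po 0 ∧ W.Po 1 = W'.Po 1 := by
  have hset := W.hset_po W' (by omega : 2 ≤ n) htail
  obtain ⟨s0, hs0, hgs0⟩ := (hset (W.Po 0)).1 ⟨0, by omega, rfl⟩
  obtain ⟨s1, hs1, hgs1⟩ := (hset (W.Po 1)).1 ⟨1, by omega, rfl⟩
  have hne : W.Po 0 ≠ W.Po 1 := fun he => by
    have := W.Po_inj (by omega) (by omega) he; omega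
  have hs01 : s0 ≠ s1 := by
    intro he
    rw [he, hgs1] at hgs0
    exact hne hgs0.symm
  have hiff : (W.Po 0 < W.Po 1) ↔ (W'.Po 0 < W'.Po 1) := decide_eq_decide.1 hbit
  rcases Nat.lt_or_ge s0 1 with h0 | h0 <;> rcases Nat.lt_or_ge s1 1 with h1 | h1
  · omega
  · have hs0e : s0 = 0 := by omega
    have hs1e : s1 = 1 := by omega
    rw [hs0e] at hgs0
    rw [hs1e] at hgs1
    exact ⟨hgs0.symm, hgs1.symm⟩
  · exfalso
    have hs0e : s0 = 1 := by omega
    have hs1e : s1 = 0 := by omega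
    rw [hs0e] at hgs0
    rw [hs1e] at hgs1
    rcases Nat.lt_or_ge (W.Po 0) (W.Po 1) with hlt | hge
    · have := hiff.1 hlt
      omega
    · have hwlt : W'.Po 0 < W'.Po 1 := by omega
      have := hiff.2 hwlt
      omega
  · omega

/-- Two consecutive vertical separations at times 1, 2 are impossible. -/
lemma not_vv (W : Wit n α w) (hv : VLineSep W.q 2) (hv' : VLineSep W.q 3) : False := by
  simp only [VLineSep, show (2:ℕ) - 1 = 1 from rfl, show (3:ℕ) - 1 = 2 from rfl] at hv hv'
  rcases hv with ⟨a, b⟩ | ⟨a, b⟩ <;> rcases hv' with ⟨a', b'⟩ | ⟨a', b'⟩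
  · have h1 := b 0 (by omega); have h2 := b' 1 (by omega); linarith
  · have h1 := b 0 (by omega); have h2 := b' 0 (by omega); linarith
  · have h1 := b 0 (by omega); have h2 := b' 0 (by omega); linarith
  · have h1 := b 0 (by omega); have h2 := b' 1 (by omega); linarith

/-- Two consecutive horizontal separations at times 1, 2 are impossible. -/
lemma not_hh (W : Wit n α w) (hv : HLineSep W.q 2) (hv' : HLineSep W.q 3) : False := by
  simp only [HLineSep, show (2:ℕ) - 1 = 1 from rfl, show (3:ℕ) - 1 = 2 from rfl] at hv hv'
  rcases hv with ⟨a, b⟩ | ⟨a, b⟩ <;> rcases hv' with ⟨a', b'⟩ | ⟨a', b'⟩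
  · have h1 := b 0 (by omega); have h2 := b' 1 (by omega); linarith
  · have h1 := b 0 (by omega); have h2 := b' 0 (by omega); linarith
  · have h1 := b 0 (by omega); have h2 := b' 0 (by omega); linarith
  · have h1 := b 0 (by omega); have h2 := b' 1 (by omega); linarith

/-- If the third pin separates vertically, the second letter is `R` or `L`. -/
lemma w1_rl (W : Wit n α w) (h1n : 1 < n) (hnum1 : (w.getD 1 Letter.U).isNum = false)
    (hv3 : VLineSep W.q 3) :
    w.getD 1 Letter.U = Letter.R ∨ w.getD 1 Letter.U = Letter.L := by
  cases hd : w.getD 1 Letter.U with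
  | n1 => rw [hd] at hnum1; simp [Letter.isNum] at hnum1
  | n2 => rw [hd] at hnum1; simp [Letter.isNum] at hnum1
  | n3 => rw [hd] at hnum1; simp [Letter.isNum] at hnum1
  | n4 => rw [hd] at hnum1; simp [Letter.isNum] at hnum1
  | R => exact Or.inl rfl
  | L => exact Or.inr rfl
  | U => exact absurd (W.not_vv (W.sepU (by omega) h1n hd).2 hv3) id
  | D => exact absurd (W.not_vv (W.sepD (by omega) h1n hd).2 hv3) id

/-- If the third pin separates horizontally, the second letter is `U` or `D`. -/
lemma w1_ud (W : Wit n α w) (h1n : 1 < n) (hnum1 : (w.getD 1 Letter.U).isNum = false)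
    (hh3 : HLineSep W.q 3) :
    w.getD 1 Letter.U = Letter.U ∨ w.getD 1 Letter.U = Letter.D := by
  cases hd : w.getD 1 Letter.U with
  | n1 => rw [hd] at hnum1; simp [Letter.isNum] at hnum1
  | n2 => rw [hd] at hnum1; simp [Letter.isNum] at hnum1
  | n3 => rw [hd] at hnum1; simp [Letter.isNum] at hnum1
  | n4 => rw [hd] at hnum1; simp [Letter.isNum] at hnum1
  | U => exact Or.inl rfl
  | D => exact Or.inr rfl
  | R => exact absurd (W.not_hh (W.sepR (by omega) h1n hd).2 hh3) id
  | L => exact absurd (W.not_hh (W.sepL (by omega) h1n hd).2 hh3) id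

/-- Sign facts for the second letter when it is a direction. -/
lemma rl_sign (W : Wit n α w) (h1n : 1 < n) :
    (w.getD 1 Letter.U = Letter.R → W.Po 0 < W.Po 1) ∧
    (w.getD 1 Letter.U = Letter.L → W.Po 1 < W.Po 0) ∧
    (w.getD 1 Letter.U = Letter.U → W.Va 0 < W.Va 1) ∧
    (w.getD 1 Letter.U = Letter.D → W.Va 1 < W.Va 0) := by
  refine ⟨fun hd => ?_, fun hd => ?_, fun hd => ?_, fun hd => ?_⟩
  · exact (W.x_iff (by omega) h1n).1 ((W.sepR (by omega) h1n hd).1 1 (by omega))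
  · exact (W.x_iff h1n (by omega)).1 ((W.sepL (by omega) h1n hd).1 1 (by omega))
  · exact (W.y_iff (by omega) h1n).1 ((W.sepU (by omega) h1n hd).1 1 (by omega))
  · exact (W.y_iff h1n (by omega)).1 ((W.sepD (by omega) h1n hd).1 1 (by omega))

/-- The second letter of a strict pin word is determined. -/
lemma w1_strict_det (hs : IsSimplePerm α) (W : Wit n α w) (W' : Wit n α w')
    (hPo : ∀ s, s < n → W.Po s = W'.Po s) (hn4 : 4 ≤ n)
    (h1 : (w.getD 1 Letter.U).isNum = false) (h1' : (w'.getD 1 Letter.U).isNum = false) :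
    w.getD 1 Letter.U = w'.getD 1 Letter.U := by
  have hd2 := W.dirEq hs W' hPo (t := 2) (by omega) (by omega)
  have hdir2 := W.no_num_high hs (i := 2) (by omega) (by omega)
  have hPo0 := hPo 0 (by omega)
  have hPo1 := hPo 1 (by omega)
  have hVa0 := (W.po_va_eq W' (by omega : 0 < n)).1 hPo0
  have hVa1 := (W.po_va_eq W' (by omega : 1 < n)).1 hPo1
  have hsign := W.rl_sign (by omega : 1 < n)
  have hsign' := W'.rl_sign (by omega : 1 < n)
  have hRL : (w.getD 1 Letter.U = Letter.R ∨ w.getD 1 Letter.U = Letter.L) →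
      (w'.getD 1 Letter.U = Letter.R ∨ w'.getD 1 Letter.U = Letter.L) →
      w.getD 1 Letter.U = w'.getD 1 Letter.U := by
    rintro (hd | hd) (hd' | hd') <;> rw [hd, hd']
    · exfalso; have a := hsign.1 hd; have b := hsign'.2.1 hd'; omega
    · exfalso; have a := hsign.2.1 hd; have b := hsign'.1 hd'; omega
  have hUD : (w.getD 1 Letter.U = Letter.U ∨ w.getD 1 Letter.U = Letter.D) →
      (w'.getD 1 Letter.U = Letter.U ∨ w'.getD 1 Letter.U = Letter.D) →
      w.getD 1 Letter.U = w'.getD 1 Letter.U := by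
    rintro (hd | hd) (hd' | hd') <;> rw [hd, hd']
    · exfalso; have a := hsign.2.2.1 hd; have b := hsign'.2.2.2 hd'; omega
    · exfalso; have a := hsign.2.2.2 hd; have b := hsign'.2.2.1 hd'; omega
  cases hd2get : w.getD 2 Letter.U with
  | n1 => rw [hd2get] at hdir2; simp [Letter.isNum] at hdir2
  | n2 => rw [hd2get] at hdir2; simp [Letter.isNum] at hdir2
  | n3 => rw [hd2get] at hdir2; simp [Letter.isNum] at hdir2
  | n4 => rw [hd2get] at hdir2; simp [Letter.isNum] at hdir2
  | U =>
    have hv3 := (W.sepU (by omega) (by omega) hd2get).2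
    have hv3' := (W'.sepU (by omega) (by omega) (hd2 ▸ hd2get)).2
    exact hRL (W.w1_rl (by omega) h1 hv3) (W'.w1_rl (by omega) h1' hv3')
  | D =>
    have hv3 := (W.sepD (by omega) (by omega) hd2get).2
    have hv3' := (W'.sepD (by omega) (by omega) (hd2 ▸ hd2get)).2
    exact hRL (W.w1_rl (by omega) h1 hv3) (W'.w1_rl (by omega) h1' hv3')
  | R =>
    have hh3 := (W.sepR (by omega) (by omega) hd2get).2
    have hh3' := (W'.sepR (by omega) (by omega) (hd2 ▸ hd2get)).2
    exact hUD (W.w1_ud (by omega) h1 hh3) (W'.w1_ud (by omega) h1' hh3')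
  | L =>
    have hh3 := (W.sepL (by omega) (by omega) hd2get).2
    have hh3' := (W'.sepL (by omega) (by omega) (hd2 ▸ hd2get)).2
    exact hUD (W.w1_ud (by omega) h1 hh3) (W'.w1_ud (by omega) h1' hh3')

/-- Sign facts for the second letter when it is a numeral. -/
lemma quad1_signs (W : Wit n α w) (h1n : 1 < n)
    (hnum : (w.getD 1 Letter.U).isNum = true) :
    ((W.Po 0 < W.Po 1) ↔ nxs (w.getD 1 Letter.U) = true) ∧
    ((W.Va 0 < W.Va 1) ↔ nys (w.getD 1 Letter.U) = true) := by
  have h := W.hletter h1n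
  have hne01P : W.Po 0 ≠ W.Po 1 := fun he => by
    have := W.Po_inj (by omega) h1n he; omega
  have hne01V : W.Va 0 ≠ W.Va 1 := fun he => by
    have := W.Va_inj (by omega) h1n he; omega
  cases hd : w.getD 1 Letter.U with
  | n1 =>
    rw [hd] at h
    have hx : W.Po 0 < W.Po 1 := (W.x_iff (by omega) h1n).1 (h.2.1 1 (by omega))
    have hy : W.Va 0 < W.Va 1 := (W.y_iff (by omega) h1n).1 (h.2.2 1 (by omega))
    simp [nxs, nys, hx, hy]
  | n2 =>
    rw [hd] at h
    have hx : W.Po 1 < W.Po 0 := (W.x_iff h1n (by omega)).1 (h.2.1 1 (by omega))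
    have hy : W.Va 0 < W.Va 1 := (W.y_iff (by omega) h1n).1 (h.2.2 1 (by omega))
    simp [nxs, nys, hy]
    omega
  | n3 =>
    rw [hd] at h
    have hx : W.Po 1 < W.Po 0 := (W.x_iff h1n (by omega)).1 (h.2.1 1 (by omega))
    have hy : W.Va 1 < W.Va 0 := (W.y_iff h1n (by omega)).1 (h.2.2 1 (by omega))
    simp [nxs, nys]
    omega
  | n4 =>
    rw [hd] at h
    have hx : W.Po 0 < W.Po 1 := (W.x_iff (by omega) h1n).1 (h.2.1 1 (by omega))
    have hy : W.Va 1 < W.Va 0 := (W.y_iff h1n (by omega)).1 (h.2.2 1 (by omega))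
    simp [nxs, nys, hx]
    omega
  | U => rw [hd] at hnum; simp [Letter.isNum] at hnum
  | D => rw [hd] at hnum; simp [Letter.isNum] at hnum
  | R => rw [hd] at hnum; simp [Letter.isNum] at hnum
  | L => rw [hd] at hnum; simp [Letter.isNum] at hnum

/-- The second letter of a quasi-strict pin word is determined. -/
lemma quad1_det (W : Wit n α w) (W' : Wit n α w')
    (hPo : ∀ s, s < n → W.Po s = W'.Po s) (h1n : 1 < n)
    (hnum : (w.getD 1 Letter.U).isNum = true) (hnum' : (w'.getD 1 Letter.U).isNum = true) :
    w.getD 1 Letter.U = w'.getD 1 Letter.U := by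
  have hPo0 := hPo 0 (by omega)
  have hPo1 := hPo 1 (by omega)
  have hVa0 := (W.po_va_eq W' (by omega : 0 < n)).1 hPo0
  have hVa1 := (W.po_va_eq W' (by omega : 1 < n)).1 hPo1
  obtain ⟨hx, hy⟩ := W.quad1_signs h1n hnum
  obtain ⟨hx', hy'⟩ := W'.quad1_signs h1n hnum'
  refine num_ext hnum hnum' ?_ ?_
  · by_cases hb : W.Po 0 < W.Po 1
    · rw [hx.1 hb, hx'.1 (by omega)]
    · have e1 : nxs (w.getD 1 Letter.U) = false := by
        rcases Bool.eq_false_or_eq_true (nxs (w.getD 1 Letter.U)) with he | he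
        · exact absurd (hx.2 he) hb
        · exact he
      have e2 : nxs (w'.getD 1 Letter.U) = false := by
        rcases Bool.eq_false_or_eq_true (nxs (w'.getD 1 Letter.U)) with he | he
        · exact absurd (hx'.2 he) (by omega)
        · exact he
      rw [e1, e2]
  · by_cases hb : W.Va 0 < W.Va 1
    · rw [hy.1 hb, hy'.1 (by omega)]
    · have e1 : nys (w.getD 1 Letter.U) = false := by
        rcases Bool.eq_false_or_eq_true (nys (w.getD 1 Letter.U)) with he | he
        · exact absurd (hy.2 he) hb
        · exact he
      have e2 : nys (w'.getD 1 Letter.U) = false := by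
        rcases Bool.eq_false_or_eq_true (nys (w'.getD 1 Letter.U)) with he | he
        · exact absurd (hy'.2 he) (by omega)
        · exact he
      rw [e1, e2]

/-- The first letter is always a numeral. -/
lemma w0_num (W : Wit n α w) (h0 : 0 < n) : (w.getD 0 Letter.U).isNum = true := by
  have h := W.hletter h0
  cases hd : w.getD 0 Letter.U with
  | n1 => rfl
  | n2 => rfl
  | n3 => rfl
  | n4 => rfl
  | U => rw [hd] at h; exact absurd h.1 (by omega)
  | D => rw [hd] at h; exact absurd h.1 (by omega)
  | L => rw [hd] at h; exact absurd h.1 (by omega)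
  | R => rw [hd] at h; exact absurd h.1 (by omega)

/-- Sign facts for the first letter (quadrant of the first pin w.r.t. the origin). -/
lemma origin_signs (W : Wit n α w) (h0 : 0 < n) :
    (((W.q 0).1 < (W.q 1).1) ↔ nxs (w.getD 0 Letter.U) = true) ∧
    (((W.q 0).2 < (W.q 1).2) ↔ nys (w.getD 0 Letter.U) = true) := by
  have h := W.hletter h0
  cases hd : w.getD 0 Letter.U with
  | n1 =>
    rw [hd] at h
    have hx := h.2.1 0 (by omega)
    have hy := h.2.2 0 (by omega)
    simp [nxs, nys, hx, hy]
  | n2 =>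
    rw [hd] at h
    have hx := h.2.1 0 (by omega)
    have hy := h.2.2 0 (by omega)
    simp [nxs, nys, hy]
    linarith
  | n3 =>
    rw [hd] at h
    have hx := h.2.1 0 (by omega)
    have hy := h.2.2 0 (by omega)
    simp [nxs, nys]
    constructor <;> linarith
  | n4 =>
    rw [hd] at h
    have hx := h.2.1 0 (by omega)
    have hy := h.2.2 0 (by omega)
    simp [nxs, nys, hx]
    linarith
  | U => rw [hd] at h; exact absurd h.1 (by omega)
  | D => rw [hd] at h; exact absurd h.1 (by omega)
  | L => rw [hd] at h; exact absurd h.1 (by omega)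
  | R => rw [hd] at h; exact absurd h.1 (by omega)

/-- If the second pin separates horizontally, the y-side of the origin is determined. -/
lemma w0_ys_of_rl (W : Wit n α w) (h1n : 1 < n) (hh : HLineSep W.q 2) :
    (nys (w.getD 0 Letter.U) = true) ↔ (W.Va 1 < W.Va 0) := by
  have hy := (W.origin_signs (by omega)).2
  simp only [HLineSep, show (2:ℕ) - 1 = 1 from rfl] at hh
  rcases hh with ⟨h1, h2⟩ | ⟨h1, h2⟩
  · have hv : W.Va 0 < W.Va 1 := (W.y_iff (by omega) h1n).1 h1
    have ho : (W.q 1).2 < (W.q 0).2 := lt_trans h1 (h2 0 (by omega))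
    constructor
    · intro hys
      exact absurd (hy.2 hys) (by linarith)
    · intro hlt
      omega
  · have hv : W.Va 1 < W.Va 0 := (W.y_iff h1n (by omega)).1 h1
    have ho : (W.q 0).2 < (W.q 1).2 := lt_trans (h2 0 (by omega)) h1
    exact ⟨fun _ => hv, fun _ => hy.1 ho⟩

/-- If the second pin separates vertically, the x-side of the origin is determined. -/
lemma w0_xs_of_ud (W : Wit n α w) (h1n : 1 < n) (hv : VLineSep W.q 2) :
    (nxs (w.getD 0 Letter.U) = true) ↔ (W.Po 1 < W.Po 0) := by
  have hx := (W.origin_signs (by omega)).1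
  simp only [VLineSep, show (2:ℕ) - 1 = 1 from rfl] at hv
  rcases hv with ⟨h1, h2⟩ | ⟨h1, h2⟩
  · have hp : W.Po 0 < W.Po 1 := (W.x_iff (by omega) h1n).1 h1
    have ho : (W.q 1).1 < (W.q 0).1 := lt_trans h1 (h2 0 (by omega))
    constructor
    · intro hxs
      exact absurd (hx.2 hxs) (by linarith)
    · intro hlt
      omega
  · have hp : W.Po 1 < W.Po 0 := (W.x_iff h1n (by omega)).1 h1
    have ho : (W.q 0).1 < (W.q 1).1 := lt_trans (h2 0 (by omega)) h1
    exact ⟨fun _ => hp, fun _ => hx.1 ho⟩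

end Wit

lemma bool_eq_of_iff {b b' : Bool} (h : (b = true) ↔ (b' = true)) : b = b' := by
  cases b <;> cases b' <;> simp_all

lemma sbBit_rl {w : List Letter}
    (hd : w.getD 1 Letter.U = Letter.R ∨ w.getD 1 Letter.U = Letter.L) :
    sbBit w = nxs (w.getD 0 Letter.U) := by
  rcases hd with hd | hd <;> (unfold sbBit; rw [hd])

lemma sbBit_ud {w : List Letter}
    (hd : w.getD 1 Letter.U = Letter.U ∨ w.getD 1 Letter.U = Letter.D) :
    sbBit w = nys (w.getD 0 Letter.U) := by
  rcases hd with hd | hd <;> (unfold sbBit; rw [hd])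

namespace Wit

variable {n : ℕ} {α : Equiv.Perm (Fin n)} {w w' : List Letter}

/-- The first letter of a strict pin word is determined by the free bit. -/
lemma w0_strict_det (W : Wit n α w) (W' : Wit n α w')
    (hPo : ∀ s, s < n → W.Po s = W'.Po s) (h1n : 1 < n)
    (hw1 : w.getD 1 Letter.U = w'.getD 1 Letter.U)
    (h1dir : (w.getD 1 Letter.U).isNum = false)
    (hsb : sbBit w = sbBit w') :
    w.getD 0 Letter.U = w'.getD 0 Letter.U := by
  have hPo0 := hPo 0 (by omega)
  have hPo1 := hPo 1 (by omega)
  have hVa0 := (W.po_va_eq W' (by omega : 0 < n)).1 hPo0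
  have hVa1 := (W.po_va_eq W' (by omega : 1 < n)).1 hPo1
  have hnum0 := W.w0_num (by omega)
  have hnum0' := W'.w0_num (by omega)
  cases hd1 : w.getD 1 Letter.U with
  | n1 => rw [hd1] at h1dir; simp [Letter.isNum] at h1dir
  | n2 => rw [hd1] at h1dir; simp [Letter.isNum] at h1dir
  | n3 => rw [hd1] at h1dir; simp [Letter.isNum] at h1dir
  | n4 => rw [hd1] at h1dir; simp [Letter.isNum] at h1dir
  | R =>
    have hh := (W.sepR le_rfl h1n hd1).2
    have hh' := (W'.sepR le_rfl h1n (hw1 ▸ hd1)).2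
    have hy := W.w0_ys_of_rl h1n hh
    have hy' := W'.w0_ys_of_rl h1n hh'
    have hyix : nys (w.getD 0 Letter.U) = nys (w'.getD 0 Letter.U) := by
      apply bool_eq_of_iff
      rw [hy, hy']
      omega
    have hxix : nxs (w.getD 0 Letter.U) = nxs (w'.getD 0 Letter.U) := by
      rw [← sbBit_rl (Or.inl hd1), ← sbBit_rl (Or.inl (hw1 ▸ hd1)), hsb]
    exact num_ext hnum0 hnum0' hxix hyix
  | L =>
    have hh := (W.sepL le_rfl h1n hd1).2
    have hh' := (W'.sepL le_rfl h1n (hw1 ▸ hd1)).2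
    have hy := W.w0_ys_of_rl h1n hh
    have hy' := W'.w0_ys_of_rl h1n hh'
    have hyix : nys (w.getD 0 Letter.U) = nys (w'.getD 0 Letter.U) := by
      apply bool_eq_of_iff
      rw [hy, hy']
      omega
    have hxix : nxs (w.getD 0 Letter.U) = nxs (w'.getD 0 Letter.U) := by
      rw [← sbBit_rl (Or.inr hd1), ← sbBit_rl (Or.inr (hw1 ▸ hd1)), hsb]
    exact num_ext hnum0 hnum0' hxix hyix
  | U =>
    have hh := (W.sepU le_rfl h1n hd1).2
    have hh' := (W'.sepU le_rfl h1n (hw1 ▸ hd1)).2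
    have hx := W.w0_xs_of_ud h1n hh
    have hx' := W'.w0_xs_of_ud h1n hh'
    have hxix : nxs (w.getD 0 Letter.U) = nxs (w'.getD 0 Letter.U) := by
      apply bool_eq_of_iff
      rw [hx, hx']
      omega
    have hyix : nys (w.getD 0 Letter.U) = nys (w'.getD 0 Letter.U) := by
      rw [← sbBit_ud (Or.inl hd1), ← sbBit_ud (Or.inl (hw1 ▸ hd1)), hsb]
    exact num_ext hnum0 hnum0' hxix hyix
  | D =>
    have hh := (W.sepD le_rfl h1n hd1).2
    have hh' := (W'.sepD le_rfl h1n (hw1 ▸ hd1)).2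
    have hx := W.w0_xs_of_ud h1n hh
    have hx' := W'.w0_xs_of_ud h1n hh'
    have hxix : nxs (w.getD 0 Letter.U) = nxs (w'.getD 0 Letter.U) := by
      apply bool_eq_of_iff
      rw [hx, hx']
      omega
    have hyix : nys (w.getD 0 Letter.U) = nys (w'.getD 0 Letter.U) := by
      rw [← sbBit_ud (Or.inr hd1), ← sbBit_ud (Or.inr (hw1 ▸ hd1)), hsb]
    exact num_ext hnum0 hnum0' hxix hyix

/-- Every pin word of a simple permutation is strict or quasi-strict. -/
lemma strict_or_quasi (W : Wit n α w) (hs : IsSimplePerm α) :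
    IsStrict w ∨ IsQuasiStrict w := by
  have hn4 := hs.1
  have hlen := W.hlen
  match w, W, hlen with
  | [], W, hlen => exact absurd hlen (by simp; omega)
  | [a], W, hlen => exact absurd hlen (by simp; omega)
  | (a :: b :: cs), W, hlen =>
    have hlcs : cs.length + 2 = n := by simpa using hlen
    have ha : a.isNum = true := W.w0_num (by omega)
    have hcs : ∀ d ∈ cs, d.IsDirection := by
      intro d hd
      obtain ⟨k, hk, hdk⟩ := List.mem_iff_getElem.1 hd
      have h1 : (a :: b :: cs).getD (k + 2) Letter.U = cs.getD k Letter.U := rfl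
      have h2 : cs.getD k Letter.U = cs[k] := List.getD_eq_getElem cs Letter.U hk
      have := W.no_num_high hs (i := k + 2) (by omega) (by omega)
      rw [h1, h2, hdk] at this
      exact this
    by_cases hb : b.isNum = true
    · right
      exact ⟨a, b, cs, rfl, ha, hb, hcs⟩
    · left
      refine ⟨a, b :: cs, rfl, ha, ?_⟩
      intro d hd
      rcases List.mem_cons.1 hd with rfl | hd
      · show d.isNum = false
        exact Bool.not_eq_true d.isNum ▸ hb
      · exact hcs d hd

end Wit

end Stmt8Aux

/-- A simple permutation has at most 48 pin words, all of which are
strict or quasi-strict. -/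
theorem statement_8 {n : ℕ} (α : Equiv.Perm (Fin n)) (h : IsSimplePerm α) :
    (PinWords α).Finite ∧ (PinWords α).ncard ≤ 48 ∧
      ∀ w ∈ PinWords α, IsStrict w ∨ IsQuasiStrict w := by
  classical
  have hn4 : 4 ≤ n := h.1
  have exW : ∀ w ∈ PinWords α, Nonempty (Wit n α w) := by
    intro w hw
    obtain ⟨p, p0, ⟨f, hrepr⟩, hseq, hword⟩ := hw
    exact ⟨⟨p, p0, f, hrepr, hseq, hword⟩⟩
  set key : List Letter → Fin 4 × Bool × (Fin 4 ⊕ Bool) := fun w =>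
    if hw : w ∈ PinWords α then
      (dirCode (w.getD (n-1) Letter.U),
        decide ((Classical.choice (exW w hw)).Po 0 < (Classical.choice (exW w hw)).Po 1),
        if (w.getD 1 Letter.U).isNum = true then Sum.inl (numCode (w.getD 0 Letter.U))
        else Sum.inr (sbBit w)) 
    else default with hkey
  have hinj : Set.InjOn key (PinWords α) := by
    intro w hw w' hw' hkeq
    simp only [hkey, dif_pos hw, dif_pos hw'] at hkeq
    set W : Wit n α w := Classical.choice (exW w hw) with hW
    set W' : Wit n α w' := Classical.choice (exW w' hw') with hW'
    obtain ⟨h1, h2, h3⟩ : dirCode (w.getD (n-1) Letter.U) = dirCode (w'.getD (n-1) Letter.U) ∧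
        decide (W.Po 0 < W.Po 1) = decide (W'.Po 0 < W'.Po 1) ∧
        (if (w.getD 1 Letter.U).isNum = true then Sum.inl (numCode (w.getD 0 Letter.U))
          else Sum.inr (sbBit w)) =
        (if (w'.getD 1 Letter.U).isNum = true then Sum.inl (numCode (w'.getD 0 Letter.U))
          else Sum.inr (sbBit w')) := by
      refine ⟨congrArg Prod.fst hkeq, ?_, ?_⟩
      · exact congrArg (fun z => z.2.1) hkeq
      · exact congrArg (fun z => z.2.2) hkeq
    -- last letters equal
    have hd_last : w.getD (n-1) Letter.U = w'.getD (n-1) Letter.U :=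
      dirCode_inj (W.no_num_high h (by omega) (by omega))
        (W'.no_num_high h (by omega) (by omega)) h1
    -- tail of reading order equal
    have htail := W.bd_all h W' hn4 hd_last
    obtain ⟨e0, e1⟩ := W.first_two W' (by omega) htail h2
    have hPo : ∀ s, s < n → W.Po s = W'.Po s := by
      intro s hsn
      match s with
      | 0 => exact e0
      | 1 => exact e1
      | (k+2) => exact htail (k+2) (by omega) hsn
    -- letters from position 2 on are equal
    have hlet : ∀ t, 2 ≤ t → t < n → w.getD t Letter.U = w'.getD t Letter.U :=
      fun t h2t htn => W.dirEq h W' hPo h2t htn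
    -- letters at positions 0 and 1
    have h01 : w.getD 0 Letter.U = w'.getD 0 Letter.U ∧
        w.getD 1 Letter.U = w'.getD 1 Letter.U := by
      by_cases hb : (w.getD 1 Letter.U).isNum = true <;>
        by_cases hb' : (w'.getD 1 Letter.U).isNum = true
      · rw [if_pos hb, if_pos hb'] at h3
        have hnc : numCode (w.getD 0 Letter.U) = numCode (w'.getD 0 Letter.U) :=
          Sum.inl.inj h3
        refine ⟨numCode_inj (W.w0_num (by omega)) (W'.w0_num (by omega)) hnc, ?_⟩
        exact W.quad1_det W' hPo (by omega) hb hb'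
      · rw [if_pos hb, if_neg hb'] at h3
        exact absurd h3 (by simp)
      · rw [if_neg hb, if_pos hb'] at h3
        exact absurd h3 (by simp)
      · rw [if_neg hb, if_neg hb'] at h3
        have hsb : sbBit w = sbBit w' := Sum.inr.inj h3
        have hbf : (w.getD 1 Letter.U).isNum = false := Bool.not_eq_true _ ▸ hb
        have hbf' : (w'.getD 1 Letter.U).isNum = false := Bool.not_eq_true _ ▸ hb'
        have hw1 : w.getD 1 Letter.U = w'.getD 1 Letter.U :=
          W.w1_strict_det h W' hPo hn4 hbf hbf'
        exact ⟨W.w0_strict_det W' hPo (by omega) hw1 hbf hsb, hw1⟩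
    -- conclude that the words are equal
    have hgd : ∀ i, i < n → w.getD i Letter.U = w'.getD i Letter.U := by
      intro i hin
      match i with
      | 0 => exact h01.1
      | 1 => exact h01.2
      | (k+2) => exact hlet (k+2) (by omega) hin
    have hlw : w.length = w'.length := by rw [W.hlen, W'.hlen]
    apply List.ext_getElem hlw
    intro i hi1 hi2
    have hin : i < n := by rw [← W.hlen]; exact hi1
    have := hgd i hin
    rwa [List.getD_eq_getElem w Letter.U hi1, List.getD_eq_getElem w' Letter.U hi2] at this
  refine ⟨?_, ?_, ?_⟩
  · exact Set.Finite.of_finite_image (Set.toFinite _) hinj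
  · have hle := Set.ncard_le_ncard_of_injOn key (Set.mapsTo_univ key _) hinj Set.finite_univ
    have h48 : (Set.univ : Set (Fin 4 × Bool × (Fin 4 ⊕ Bool))).ncard = 48 := by
      rw [Set.ncard_univ, Nat.card_eq_fintype_card]
      simp
    omega
  · intro w hw
    exact (Classical.choice (exW w hw)).strict_or_quasi h

end PinStmt
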